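/- arXiv:2104.09813 — 5 statements merged into one kernel-verified Lean document; each statement's English description precedes it below -/
import Mathlib

section
/- Let h be a Legendre reference function and let g₁, g₂ ∈ ℝ^d. Define x⁺, x₁⁺, x₂⁺ by ∇h(x⁺) = ∇h(x) - g, ∇h(x₁⁺) = ∇h(x) - g₁, ∇h(x₂⁺) = ∇h(x) - g₂ with g = (g₁ + g₂)/2. Then D_h(x, x⁺) ≤ (1/2)[D_h(x, x₁⁺) + D_h(x, x₂⁺)]. -/
open MeasureTheory Set Finset
noncomputable section

abbrev E (d : ℕ) := EuclideanSpace ℝ (Fin d)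

/-- Bregman divergence `D_f(x,y) = f x - f y - ⟪∇f(y), x - y⟫`. -/
def breg {d : ℕ} (f : E d → ℝ) (f' : E d → E d) (x y : E d) : ℝ :=
  f x - f y - inner ℝ (f' y) (x - y)

/-!
Since `∇h(x⁺)` is the average of `∇h(x₁⁺)` and `∇h(x₂⁺)`, the terms of `D_h(x, ·)` that are
linear in the gradient average exactly, and what is left is bounded by averaging the
first-order convexity inequalities `h(xᵢ⁺) + ⟪∇h(xᵢ⁺), x⁺ - xᵢ⁺⟫ ≤ h(x⁺)`.
-/

theorem ConvexOn.le_sub_of_hasFDerivAt {F : Type*} [NormedAddCommGroup F] [NormedSpace ℝ F]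
    {s : Set F} {f : F → ℝ} {f' : StrongDual ℝ F} {x y : F} (hf : ConvexOn ℝ s f)
    (hx : x ∈ s) (hy : y ∈ s) (hf' : HasFDerivAt f f' x) :
    f' (y - x) ≤ f y - f x := by
  set L : ℝ →ᵃ[ℝ] F := AffineMap.lineMap x y
  have hline : ConvexOn ℝ (L ⁻¹' s) (f ∘ L) := hf.comp_affineMap L
  have hderiv : HasDerivAt (f ∘ L) (f' (y - x)) 0 := by
    refine HasFDerivAt.comp_hasDerivAt (0 : ℝ) ?_ AffineMap.hasDerivAt_lineMap
    simpa [L] using hf'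
  simpa [L, slope_def_field] using
    hline.le_slope_of_hasDerivAt (by simpa [L] using hx) (by simpa [L] using hy) zero_lt_one
      hderiv

theorem ConvexOn.inner_le_sub_of_hasGradientAt {F : Type*} [NormedAddCommGroup F]
    [InnerProductSpace ℝ F] [CompleteSpace F] {s : Set F} {f : F → ℝ} {p x y : F}
    (hf : ConvexOn ℝ s f) (hx : x ∈ s) (hy : y ∈ s) (hp : HasGradientAt f p x) :
    inner ℝ p (y - x) ≤ f y - f x := by
  simpa using hf.le_sub_of_hasFDerivAt hx hy hp.hasFDerivAt

theorem breg_le_of_grad_eq_convex_combination {d : ℕ} {s : Set (E d)} {f : E d → ℝ}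
    {f' : E d → E d} (hf : ConvexOn ℝ s f) {x y y₁ y₂ : E d} {a b : ℝ}
    (ha : 0 ≤ a) (hb : 0 ≤ b) (hab : a + b = 1) (hy : y ∈ s) (hy₁ : y₁ ∈ s) (hy₂ : y₂ ∈ s)
    (hf'₁ : HasGradientAt f (f' y₁) y₁) (hf'₂ : HasGradientAt f (f' y₂) y₂)
    (hgrad : f' y = a • f' y₁ + b • f' y₂) :
    breg f f' x y ≤ a * breg f f' x y₁ + b * breg f f' x y₂ := by
  have h₁ := hf.inner_le_sub_of_hasGradientAt hy₁ hy hf'₁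
  have h₂ := hf.inner_le_sub_of_hasGradientAt hy₂ hy hf'₂
  have hinner : inner ℝ (f' y) (x - y) =
      a * inner ℝ (f' y₁) (x - y) + b * inner ℝ (f' y₂) (x - y) := by
    rw [hgrad, inner_add_left, real_inner_smul_left, real_inner_smul_left]
  have hx_sub : ∀ z, x - z = (x - y) + (y - z) := fun z => by abel
  simp only [breg, hinner, hx_sub y₁, hx_sub y₂, inner_add_right]
  obtain rfl : b = 1 - a := by linarith
  linarith [mul_le_mul_of_nonneg_left h₁ ha, mul_le_mul_of_nonneg_left h₂ hb]

theorem bregman_young_general {d : ℕ} (C : Set (E d))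
    (h : E d → ℝ) (h' : E d → E d)
    (hhsc : StrictConvexOn ℝ (interior C) h)
    (hh' : ∀ x ∈ interior C, HasGradientAt h (h' x) x)
    (g1 g2 : E d) (x xp x1 x2 : E d)
    (hxp : xp ∈ interior C)
    (hx1 : x1 ∈ interior C) (hx2 : x2 ∈ interior C)
    (hup : h' xp = h' x - (2⁻¹ : ℝ) • (g1 + g2))
    (hu1 : h' x1 = h' x - g1) (hu2 : h' x2 = h' x - g2) :
    breg h h' x xp ≤ (1 / 2) * (breg h h' x x1 + breg h h' x x2) := by
  have hgrad : h' xp = (1 / 2 : ℝ) • h' x1 + (1 / 2 : ℝ) • h' x2 := by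
    rw [hup, hu1, hu2]; module
  rw [mul_add]
  exact breg_le_of_grad_eq_convex_combination hhsc.convexOn (by norm_num) (by norm_num)
    (by norm_num) hxp hx1 hx2 (hh' x1 hx1) (hh' x2 hx2) hgrad

/-- Let `h` be a Legendre reference function and `g₁, g₂ ∈ ℝ^d`.
Define `x⁺, x₁⁺, x₂⁺` by `∇h(x⁺) = ∇h(x) - g`, `∇h(x₁⁺) = ∇h(x) - g₁`,
`∇h(x₂⁺) = ∇h(x) - g₂` with `g = (g₁+g₂)/2`.  Then
`D_h(x, x⁺) ≤ (1/2)[D_h(x, x₁⁺) + D_h(x, x₂⁺)]`. -/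
theorem bregman_young {d : ℕ} (C : Set (E d)) (hC : IsClosed C) (hCconv : Convex ℝ C)
    (h : E d → ℝ) (h' : E d → E d)
    (hh2 : ContDiffOn ℝ 2 h (interior C))
    (hhsc : StrictConvexOn ℝ (interior C) h)
    (hh' : ∀ x ∈ interior C, HasGradientAt h (h' x) x)
    (hblanket : ∀ y : E d, ∃! z, z ∈ interior C ∧
      IsMinOn (fun u => h u - (inner ℝ u y : ℝ)) C z)
    (g1 g2 : E d) (x xp x1 x2 : E d)
    (hx : x ∈ interior C) (hxp : xp ∈ interior C)
    (hx1 : x1 ∈ interior C) (hx2 : x2 ∈ interior C)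
    (hup : h' xp = h' x - (2⁻¹ : ℝ) • (g1 + g2))
    (hu1 : h' x1 = h' x - g1) (hu2 : h' x2 = h' x - g2) :
    breg h h' x xp ≤ (1 / 2) * (breg h h' x x1 + breg h h' x x2) :=
  bregman_young_general C h h' hhsc hh' g1 g2 x xp x1 x2 hxp hx1 hx2 hup hu1 hu2
end
end

section
/- In the interpolation setting, Bregman SGD converges linearly: if ∇f_ξ(x*) = 0 for all ξ (so σ² = 0), each f_ξ is convex and L-relatively smooth w.r.t. h, f is μ-relatively strongly convex with μ > 0, and η ≤ 1/(2L), then E[D_h(x*, x_t)] ≤ (1 - ημ)^t D_h(x*, x₀). -/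
open MeasureTheory Set Finset ProbabilityTheory
noncomputable section

/-!
Pathwise, a Bregman SGD step from `x` with sample `ξ` satisfies
`D_h(x*, x⁺) ≤ D_h(x*, x) - η D_{f_ξ}(x*, x)`: the three-point identity produces `-D_h(x⁺, x)`,
which absorbs `η D_{f_ξ}(x⁺, x)` by relative smoothness and `η L ≤ 1`, and interpolation makes `x*`
a minimizer of every `f_ξ`. As `ξ_t` is independent of `x_t`, averaging over `ξ` turns
`D_{f_ξ}(x*, x_t)` into `D_f(x*, x_t) ≥ μ D_h(x*, x_t)`, so `E[D_h(x*, x_t)]` contracts by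
`1 - η μ` at every step.

On the measure-theoretic side, integrability of the samples follows from the junk value of the
Bochner integral, and `(y, ξ) ↦ D_{f_ξ}(x*, y)` is jointly measurable because `f_ξ y - f_ξ x*` is
a limit of Riemann sums of gradients and is continuous in `y`.
-/

open Filter Topology

section Gradient

variable {F : Type*} [NormedAddCommGroup F] [InnerProductSpace ℝ F] [CompleteSpace F]
  {φ : F → ℝ} {g x : F}

theorem HasGradientAt.hasDerivAt_comp_add_smul (hg : HasGradientAt φ g x) (v : F) :
    HasDerivAt (fun t : ℝ => φ (x + t • v)) (inner ℝ g v) 0 := by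
  have hline : HasDerivAt (fun t : ℝ => x + t • v) v 0 := by
    simpa using ((hasDerivAt_id (0 : ℝ)).smul_const v).const_add x
  have hg' : HasFDerivAt φ (InnerProductSpace.toDual ℝ F g) (x + (0 : ℝ) • v) := by
    simpa using hg.hasFDerivAt
  simpa [Function.comp_def] using (hg'.comp_hasDerivAt 0 hline : _)

theorem HasGradientAt.tendsto_nat_slope (hg : HasGradientAt φ g x) (v : F) :
    Tendsto (fun k : ℕ => ((k : ℝ) + 1) * (φ (x + ((k : ℝ) + 1)⁻¹ • v) - φ x)) atTop
      (𝓝 (inner ℝ g v)) := by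
  have hslope := hasDerivAt_iff_tendsto_slope_zero.1 (hg.hasDerivAt_comp_add_smul v)
  have hseq : Tendsto (fun k : ℕ => ((k : ℝ) + 1)⁻¹) atTop (𝓝[≠] 0) :=
    tendsto_nhdsWithin_iff.2
      ⟨by simpa only [one_div] using tendsto_one_div_add_atTop_nhds_zero_nat (𝕜 := ℝ),
        Eventually.of_forall fun k => by simp only [mem_compl_iff, mem_singleton_iff]; positivity⟩
  simpa [Function.comp_def] using hslope.comp hseq

theorem ConvexOn.inner_gradient_le_sub {s : Set F} (hφ : ConvexOn ℝ s φ) {y : F} (hx : x ∈ s)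
    (hy : y ∈ s) (hg : HasGradientAt φ g x) :
    inner ℝ g (y - x) ≤ φ y - φ x := by
  have hline : ConvexOn ℝ (AffineMap.lineMap x y ⁻¹' s) (fun t : ℝ => φ (x + t • (y - x))) := by
    have hcomp : (fun t : ℝ => φ (x + t • (y - x))) = φ ∘ AffineMap.lineMap x y := by
      ext t
      simp [AffineMap.lineMap_apply_module', add_comm]
    rw [hcomp]
    exact hφ.comp_affineMap _
  simpa [slope] using hline.le_slope_of_hasDerivAt (x := 0) (y := 1) (by simpa) (by simpa)
    one_pos (hg.hasDerivAt_comp_add_smul (y - x))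

end Gradient

section Bregman

variable {d : ℕ} {s : Set (E d)} {φ : E d → ℝ} {φ' : E d → E d} {x y : E d}

theorem breg_nonneg (hφ : ConvexOn ℝ s φ) (hx : x ∈ s) (hy : y ∈ s)
    (hgrad : HasGradientAt φ (φ' y) y) : 0 ≤ breg φ φ' x y := by
  have := hφ.inner_gradient_le_sub hy hx hgrad
  unfold breg
  linarith

theorem breg_pos (hφ : StrictConvexOn ℝ s φ) (hx : x ∈ s) (hy : y ∈ s) (hxy : x ≠ y)
    (hgrad : HasGradientAt φ (φ' y) y) : 0 < breg φ φ' x y := by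
  set z : E d := (2⁻¹ : ℝ) • x + (2⁻¹ : ℝ) • y
  have hz : z ∈ s := hφ.1 hx hy (by norm_num) (by norm_num) (by norm_num)
  have hmid : φ z < 2⁻¹ * φ x + 2⁻¹ * φ y :=
    hφ.2 hx hy hxy (by norm_num) (by norm_num) (by norm_num)
  have htangent := hφ.convexOn.inner_gradient_le_sub hy hz hgrad
  rw [show z - y = (2⁻¹ : ℝ) • (x - y) by module, real_inner_smul_right] at htangent
  unfold breg
  linarith

theorem mul_breg_le_of_mirror_step {h : E d → ℝ} {h' g : E d → E d} {x' xstar : E d} {L η : ℝ}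
    (hh : ConvexOn ℝ s h) (hφ : ConvexOn ℝ s φ) (hx : x ∈ s) (hx' : x' ∈ s) (hxstar : xstar ∈ s)
    (hhx : HasGradientAt h (h' x) x) (hstar : HasGradientAt φ 0 xstar)
    (hsmooth : breg φ g x' x ≤ L * breg h h' x' x) (hη : 0 ≤ η) (hηL : η * L ≤ 1)
    (hstep : h' x' = h' x - η • g x) :
    η * breg φ g xstar x ≤ breg h h' xstar x - breg h h' xstar x' := by
  have hmin : φ xstar ≤ φ x' := by
    simpa using hφ.inner_gradient_le_sub hxstar hx' hstar
  have hD := breg_nonneg hh hx' hx hhx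
  have hsplit : ∀ v : E d, inner ℝ v (xstar - x') = inner ℝ v (xstar - x) - inner ℝ v (x' - x) :=
    fun v => by rw [← inner_sub_right]; congr 1; abel
  have hsmooth' : η * breg φ g x' x ≤ breg h h' x' x := by
    nlinarith [mul_le_mul_of_nonneg_left hsmooth hη, mul_le_mul_of_nonneg_right hηL hD]
  unfold breg at hsmooth' ⊢
  rw [hstep, inner_sub_left, real_inner_smul_left, hsplit, hsplit]
  nlinarith [mul_le_mul_of_nonneg_left hmin hη]

end Bregman

theorem riemannSum_mem_Icc_of_supporting {F a : ℝ → ℝ}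
    (hsupp : ∀ t ∈ Icc (0 : ℝ) 1, ∀ s ∈ Icc (0 : ℝ) 1, F t + (s - t) * a t ≤ F s) {n : ℕ}
    (hn : 0 < n) :
    ∑ k ∈ range n, a (k / n) / n ∈ Icc (F 1 - F 0 - (a 1 - a 0) / n) (F 1 - F 0) := by
  have hn' : (0 : ℝ) < n := by exact_mod_cast hn
  have hmem : ∀ k ≤ n, (k : ℝ) / n ∈ Icc (0 : ℝ) 1 := fun k hk =>
    ⟨by positivity, div_le_one_of_le₀ (by exact_mod_cast hk) hn'.le⟩
  have hgap : ∀ k : ℕ, ((k + 1 : ℕ) : ℝ) / n - k / n = 1 / n := fun k => by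
    push_cast; ring
  have htelescope : ∑ k ∈ range n, (F ((k + 1 : ℕ) / n) - F (k / n)) = F 1 - F 0 := by
    rw [Finset.sum_range_sub (fun k : ℕ => F (k / n)), div_self hn'.ne', Nat.cast_zero,
      zero_div]
  have hshift : ∑ k ∈ range n, a ((k + 1 : ℕ) / n) / n
      = ∑ k ∈ range n, a (k / n) / n + (a 1 - a 0) / n := by
    have h1 := Finset.sum_range_succ' (fun k : ℕ => a (k / n) / n) n
    rw [Finset.sum_range_succ, div_self hn'.ne'] at h1
    simp only [Nat.cast_zero, zero_div] at h1
    linarith [sub_div (a 1) (a 0) n]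
  constructor
  · have hup : ∀ k ∈ range n, F ((k + 1 : ℕ) / n) - F (k / n) ≤ a ((k + 1 : ℕ) / n) / n := by
      intro k hk
      have hk := Finset.mem_range.1 hk
      have := hsupp _ (hmem (k + 1) hk) _ (hmem k hk.le)
      rw [← neg_sub, hgap] at this
      linarith [show -(1 / (n : ℝ)) * a ((k + 1 : ℕ) / n) = -(a ((k + 1 : ℕ) / n) / n) by ring]
    linarith [Finset.sum_le_sum hup]
  · have hlow : ∀ k ∈ range n, a (k / n) / n ≤ F ((k + 1 : ℕ) / n) - F (k / n) := by
      intro k hk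
      have hk := Finset.mem_range.1 hk
      have := hsupp _ (hmem k hk.le) _ (hmem (k + 1) hk)
      rw [hgap] at this
      linarith [show 1 / (n : ℝ) * a (k / n) = a (k / n) / n by ring]
    linarith [Finset.sum_le_sum hlow]

theorem tendsto_riemannSum_of_supporting {F a : ℝ → ℝ}
    (hsupp : ∀ t ∈ Icc (0 : ℝ) 1, ∀ s ∈ Icc (0 : ℝ) 1, F t + (s - t) * a t ≤ F s) :
    Tendsto (fun n : ℕ => ∑ k ∈ range n, a (k / n) / n) atTop (𝓝 (F 1 - F 0)) := by
  have herr : Tendsto (fun n : ℕ => F 1 - F 0 - (a 1 - a 0) / n) atTop (𝓝 (F 1 - F 0)) := by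
    simpa using tendsto_const_nhds.sub (tendsto_const_div_atTop_nhds_zero_nat (a 1 - a 0))
  refine tendsto_of_tendsto_of_tendsto_of_le_of_le' herr tendsto_const_nhds ?_ ?_ <;>
    filter_upwards [eventually_gt_atTop 0] with n hn
  exacts [(riemannSum_mem_Icc_of_supporting hsupp hn).1,
    (riemannSum_mem_Icc_of_supporting hsupp hn).2]

theorem aestronglyMeasurable_sub_of_hasGradientAt {F Ξ : Type*} [NormedAddCommGroup F]
    [InnerProductSpace ℝ F] [CompleteSpace F] [MeasurableSpace Ξ] {ν : Measure Ξ} {s : Set F}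
    (hs : Convex ℝ s) {φ : Ξ → F → ℝ} {g : Ξ → F → F} (hconv : ∀ ξ, ConvexOn ℝ s (φ ξ))
    (hgrad : ∀ ξ, ∀ z ∈ s, HasGradientAt (φ ξ) (g ξ z) z)
    (hg : ∀ z ∈ s, AEStronglyMeasurable (fun ξ => g ξ z) ν) {x y : F} (hx : x ∈ s) (hy : y ∈ s) :
    AEStronglyMeasurable (fun ξ => φ ξ y - φ ξ x) ν := by
  set z : ℝ → F := fun t => x + t • (y - x)
  have hz : ∀ t ∈ Icc (0 : ℝ) 1, z t ∈ s := fun t ht => hs.add_smul_sub_mem hx hy ht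
  refine aestronglyMeasurable_of_tendsto_ae atTop
    (f := fun (n : ℕ) ξ => ∑ k ∈ range n, inner ℝ (g ξ (z (k / n))) (y - x) / n)
    (fun n => Finset.aestronglyMeasurable_fun_sum _ fun k hk => ?_) (ae_of_all _ fun ξ => ?_)
  · have hk : (k : ℝ) / n ∈ Icc (0 : ℝ) 1 :=
      ⟨by positivity, div_le_one_of_le₀ (by exact_mod_cast (Finset.mem_range.1 hk).le)
        (Nat.cast_nonneg n)⟩
    exact ((hg _ (hz _ hk)).inner aestronglyMeasurable_const).mul_const _
  · have hsupp : ∀ t ∈ Icc (0 : ℝ) 1, ∀ r ∈ Icc (0 : ℝ) 1,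
        φ ξ (z t) + (r - t) * inner ℝ (g ξ (z t)) (y - x) ≤ φ ξ (z r) := by
      intro t ht r hr
      have := (hconv ξ).inner_gradient_le_sub (hz t ht) (hz r hr) (hgrad ξ _ (hz t ht))
      rw [show z r - z t = (r - t) • (y - x) by simp only [z]; module,
        real_inner_smul_right] at this
      linarith
    simpa [z] using tendsto_riemannSum_of_supporting hsupp

/-- Along a dense sequence of `U`, the nearest-point approximations have measurable versions off
a single null set. -/
theorem aestronglyMeasurable_uncurry_of_continuousOn {X Ξ : Type*} [PseudoMetricSpace X]
    [TopologicalSpace.SeparableSpace X] [MeasurableSpace X] [OpensMeasurableSpace X]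
    [MeasurableSpace Ξ] {m : Measure X} {ν : Measure Ξ} {U : Set X} (hmU : ∀ᵐ x ∂m, x ∈ U)
    {R : X → Ξ → ℝ} (hcont : ∀ ξ, ContinuousOn (fun x => R x ξ) U)
    (hmeas : ∀ x ∈ U, AEStronglyMeasurable (R x) ν) :
    AEStronglyMeasurable (Function.uncurry R) (m.prod ν) := by
  rcases U.eq_empty_or_nonempty with rfl | ⟨x₀, hx₀⟩
  · have hm : m = 0 := by simpa using hmU
    simp [hm]
  have : Nonempty U := ⟨⟨x₀, hx₀⟩⟩
  set e : ℕ → X := fun n => TopologicalSpace.denseSeq U n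
  have heU : ∀ n, e n ∈ U := fun n => (TopologicalSpace.denseSeq U n).2
  have hdense : ∀ x ∈ U, x ∈ closure (range e) := fun x hx =>
    map_mem_closure continuous_subtype_val (TopologicalSpace.denseRange_denseSeq U ⟨x, hx⟩)
      (by rintro _ ⟨n, rfl⟩; exact ⟨n, rfl⟩)
  have hversion : ∀ n, ∃ g : Ξ → ℝ, Measurable g ∧ R (e n) =ᵐ[ν] g := fun n =>
    ⟨_, (hmeas _ (heU n)).stronglyMeasurable_mk.measurable, (hmeas _ (heU n)).ae_eq_mk⟩
  choose g hgm hg using hversion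
  have hgood : ∀ᵐ q ∂(m.prod ν), q.1 ∈ U ∧ ∀ n, R (e n) q.2 = g n q.2 :=
    (Measure.quasiMeasurePreserving_fst.ae hmU).and
      (Measure.quasiMeasurePreserving_snd.ae (ae_all_iff.2 hg))
  refine aestronglyMeasurable_of_tendsto_ae atTop
    (f := fun N q => g (SimpleFunc.nearestPtInd e N q.1) q.2) (fun N => ?_) ?_
  · have hG : Measurable fun p : Ξ × ℕ => g p.2 p.1 :=
      measurable_from_prod_countable_left fun n => hgm n
    exact (hG.comp (measurable_snd.prodMk
      ((SimpleFunc.nearestPtInd e N).measurable.comp measurable_fst))).aestronglyMeasurable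
  · filter_upwards [hgood] with q ⟨hqU, hqg⟩
    have hnear : Tendsto (fun N => SimpleFunc.nearestPt e N q.1) atTop (𝓝[U] q.1) :=
      tendsto_nhdsWithin_iff.2 ⟨SimpleFunc.tendsto_nearestPt (hdense _ hqU),
        Eventually.of_forall fun N => heU _⟩
    simpa [SimpleFunc.nearestPt, ← hqg, Function.comp_def, Function.uncurry] using
      ((hcont q.2) q.1 hqU).tendsto.comp hnear

/-- `φ ξ y - φ ξ z` is a Carathéodory function of `(y, ξ)`, and the gradient term is a limit of
its difference quotients towards `z`. -/
theorem aestronglyMeasurable_breg_uncurry {d : ℕ} {Ξ : Type*} [MeasurableSpace Ξ]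
    {ν : Measure Ξ} [SFinite ν] {s : Set (E d)} (hs : IsOpen s) (hsc : Convex ℝ s)
    {φ : Ξ → E d → ℝ} {g : Ξ → E d → E d} (hconv : ∀ ξ, ConvexOn ℝ s (φ ξ))
    (hgrad : ∀ ξ, ∀ y ∈ s, HasGradientAt (φ ξ) (g ξ y) y)
    (hg : ∀ y ∈ s, AEStronglyMeasurable (fun ξ => g ξ y) ν) {z : E d} (hz : z ∈ s)
    {m : Measure (E d)} [SFinite m] (hm : ∀ᵐ y ∂m, y ∈ s) :
    AEStronglyMeasurable (fun p : E d × Ξ => breg (φ p.2) (g p.2) z p.1) (m.prod ν) := by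
  set R : E d → Ξ → ℝ := fun y ξ => φ ξ y - φ ξ z
  have hR : ∀ m' : Measure (E d), (∀ᵐ y ∂m', y ∈ s) →
      AEStronglyMeasurable (Function.uncurry R) (m'.prod ν) := fun m' hm' =>
    aestronglyMeasurable_uncurry_of_continuousOn hm'
      (fun ξ y hy => ((hgrad ξ y hy).differentiableAt.continuousAt.sub
        continuousAt_const).continuousWithinAt)
      (fun y hy => aestronglyMeasurable_sub_of_hasGradientAt hsc hconv hgrad hg hz hy)
  set w : ℕ → E d → E d := fun k y => y + ((k : ℝ) + 1)⁻¹ • (z - y)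
  have hwm : ∀ k, Measurable (w k) := fun k => by fun_prop
  have hRw : ∀ k, AEStronglyMeasurable (fun p : E d × Ξ => R (w k p.1) p.2) (m.prod ν) := by
    intro k
    have hws : ∀ᵐ y ∂(m.map (w k)), y ∈ s := by
      refine (ae_map_iff (hwm k).aemeasurable hs.measurableSet).2 (hm.mono fun y hy => ?_)
      refine hsc.add_smul_sub_mem hy hz ⟨by positivity, inv_le_one_of_one_le₀ ?_⟩
      linarith [(k.cast_nonneg : (0 : ℝ) ≤ k)]
    have := hR _ hws
    rw [← Measure.map_id (μ := ν), Measure.map_prod_map _ _ (hwm k) measurable_id] at this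
    exact this.comp_measurable ((hwm k).prodMap measurable_id)
  refine aestronglyMeasurable_of_tendsto_ae atTop
    (f := fun (k : ℕ) p => -R p.1 p.2 - ((k : ℝ) + 1) * (R (w k p.1) p.2 - R p.1 p.2))
    (fun k => ?_) ?_
  · exact (hR m hm).neg.sub ((hRw k).sub (hR m hm) |>.const_mul _)
  · filter_upwards [Measure.quasiMeasurePreserving_fst.ae hm] with p hp
    have := ((hgrad p.2 p.1 hp).tendsto_nat_slope (z - p.1)).const_sub (-R p.1 p.2)
    simpa [R, w, breg, sub_eq_add_neg, add_comm, add_left_comm, add_assoc] using this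

theorem ProbabilityTheory.IndepFun.integral_comp_le_integral_comp_prod {Ω α β : Type*}
    [MeasurableSpace Ω] [MeasurableSpace α] [MeasurableSpace β] {P : Measure Ω}
    [IsFiniteMeasure P] {X : Ω → α} {Y : Ω → β} (hXY : IndepFun X Y P) (hX : AEMeasurable X P)
    (hY : AEMeasurable Y P) {ψ : α → ℝ} {φ : α × β → ℝ}
    (hφ : AEStronglyMeasurable φ ((P.map X).prod (P.map Y)))
    (hφi : Integrable (fun ω => φ (X ω, Y ω)) P) (hψi : Integrable (fun ω => ψ (X ω)) P)
    (hle : ∀ᵐ ω ∂P, ψ (X ω) ≤ ∫ y, φ (X ω, y) ∂(P.map Y)) :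
    ∫ ω, ψ (X ω) ∂P ≤ ∫ ω, φ (X ω, Y ω) ∂P := by
  have hXY' : AEMeasurable (fun ω => (X ω, Y ω)) P := hX.prodMk hY
  have hprod : P.map (fun ω => (X ω, Y ω)) = (P.map X).prod (P.map Y) :=
    (indepFun_iff_map_prod_eq_prod_map_map hX hY).1 hXY
  have hφ' : Integrable φ ((P.map X).prod (P.map Y)) := by
    rw [← hprod] at hφ ⊢
    exact (integrable_map_measure hφ hXY').2 hφi
  have hsection : Integrable (fun x => ∫ y, φ (x, y) ∂(P.map Y)) (P.map X) :=
    hφ'.integral_prod_left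
  calc ∫ ω, ψ (X ω) ∂P ≤ ∫ ω, ∫ y, φ (X ω, y) ∂(P.map Y) ∂P :=
        integral_mono_ae hψi ((integrable_map_measure hsection.1 hX).1 hsection) hle
    _ = ∫ p, φ p ∂((P.map X).prod (P.map Y)) := by
        rw [← integral_map hX hsection.1, integral_prod φ hφ']
    _ = ∫ ω, φ (X ω, Y ω) ∂P := by
        rw [← hprod, integral_map hXY' (hprod ▸ hφ)]

theorem integral_breg_eq {d : ℕ} {Ξ : Type*} [MeasurableSpace Ξ] {ν : Measure Ξ}
    {f : E d → ℝ} {f' : E d → E d} {fs : Ξ → E d → ℝ} {G : Ξ → E d → E d}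
    (hf : ∀ x, f x = ∫ ξ, fs ξ x ∂ν) (hf' : ∀ x, f' x = ∫ ξ, G ξ x ∂ν) {x y : E d}
    (hx : Integrable (fun ξ => fs ξ x) ν) (hy : Integrable (fun ξ => fs ξ y) ν)
    (hGy : Integrable (fun ξ => G ξ y) ν) :
    ∫ ξ, breg (fs ξ) (G ξ) x y ∂ν = breg f f' x y := by
  have hxy : Integrable (fun ξ => fs ξ x - fs ξ y) ν := hx.sub hy
  unfold breg
  rw [integral_sub hxy (hGy.inner_const _), integral_sub hx hy, hf, hf, hf']
  congr 1
  rw [real_inner_comm, ← integral_inner hGy]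
  simp_rw [real_inner_comm]

section SampleFamily

variable {d : ℕ} {Ξ : Type*} [MeasurableSpace Ξ] {ν : Measure Ξ} {s : Set (E d)}
  {h f : E d → ℝ} {h' f' : E d → E d} {fs : Ξ → E d → ℝ} {G : Ξ → E d → E d} {L μ : ℝ}
  {xstar : E d}

/-- A non-integrable `G (·) x` would give the junk value `f' x = 0`, and relative strong convexity
of `f` rules out zeros of `f'` besides `xstar`. -/
theorem integrable_sample_gradient (hμ : 0 < μ) (hh : StrictConvexOn ℝ s h)
    (hh' : ∀ x ∈ s, HasGradientAt h (h' x) x) (hf' : ∀ x, f' x = ∫ ξ, G ξ x ∂ν)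
    (hrelsc : ∀ x ∈ s, ∀ y ∈ s, μ * breg h h' x y ≤ breg f f' x y) (hxstar : xstar ∈ s)
    (hcrit : f' xstar = 0) (hinterp : ∀ ξ, G ξ xstar = 0) {x : E d} (hx : x ∈ s) :
    Integrable (fun ξ => G ξ x) ν := by
  rcases eq_or_ne x xstar with rfl | hne
  · simp [hinterp]
  refine Integrable.of_integral_ne_zero fun hzero => ?_
  rw [← hf'] at hzero
  have hsum : breg f f' x xstar + breg f f' xstar x = 0 := by
    simp only [breg, hcrit, hzero, inner_zero_left]
    ring
  nlinarith [hrelsc x hx xstar hxstar, hrelsc xstar hxstar x hx,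
    mul_pos hμ (breg_pos hh hx hxstar hne (hh' _ hxstar)),
    mul_nonneg hμ.le (breg_nonneg hh.convexOn hxstar hx (hh' _ hx))]

theorem integrable_sample_sub [IsFiniteMeasure ν] (hsc : Convex ℝ s)
    (hfsconv : ∀ ξ, ConvexOn ℝ s (fs ξ)) (hfsgrad : ∀ ξ, ∀ x ∈ s, HasGradientAt (fs ξ) (G ξ x) x)
    (hGint : ∀ x ∈ s, Integrable (fun ξ => G ξ x) ν)
    (hrelsmooth : ∀ ξ, ∀ x ∈ s, ∀ y ∈ s, breg (fs ξ) (G ξ) x y ≤ L * breg h h' x y)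
    (hxstar : xstar ∈ s) (hinterp : ∀ ξ, G ξ xstar = 0) {x : E d} (hx : x ∈ s) :
    Integrable (fun ξ => fs ξ x - fs ξ xstar) ν := by
  refine Integrable.mono' (integrable_const (L * breg h h' x xstar))
    (aestronglyMeasurable_sub_of_hasGradientAt hsc hfsconv hfsgrad
      (fun y hy => (hGint y hy).1) hxstar hx) (ae_of_all _ fun ξ => ?_)
  have hmin : fs ξ xstar ≤ fs ξ x := by
    simpa [hinterp] using (hfsconv ξ).inner_gradient_le_sub hxstar hx (hfsgrad ξ _ hxstar)
  have hsmooth := hrelsmooth ξ x hx xstar hxstar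
  simp only [breg, hinterp, inner_zero_left, sub_zero] at hsmooth
  rw [Real.norm_of_nonneg (sub_nonneg.2 hmin)]
  exact hsmooth

/-- Once the differences `fs ξ x - fs ξ xstar` are integrable, integrability of the values
follows from `f x ≠ 0` at a single point, and `f y₀ > f xstar` since `y₀ ≠ xstar`. -/
theorem integrable_sample_value [IsFiniteMeasure ν] (hμ : 0 < μ) (hh : StrictConvexOn ℝ s h)
    (hh' : ∀ x ∈ s, HasGradientAt h (h' x) x) (hf : ∀ x, f x = ∫ ξ, fs ξ x ∂ν)
    (hrelsc : ∀ x ∈ s, ∀ y ∈ s, μ * breg h h' x y ≤ breg f f' x y) (hxstar : xstar ∈ s)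
    (hcrit : f' xstar = 0) (hsub : ∀ x ∈ s, Integrable (fun ξ => fs ξ x - fs ξ xstar) ν)
    {y₀ : E d} (hy₀ : y₀ ∈ s) (hne : y₀ ≠ xstar) {x : E d} (hx : x ∈ s) :
    Integrable (fun ξ => fs ξ x) ν := by
  suffices hstar : Integrable (fun ξ => fs ξ xstar) ν by
    exact (hstar.add (hsub x hx)).congr (ae_of_all _ fun ξ => add_sub_cancel _ _)
  have hgap : f xstar ≠ f y₀ := by
    have hsc := hrelsc y₀ hy₀ xstar hxstar
    rw [show breg f f' y₀ xstar = f y₀ - f xstar by simp [breg, hcrit]] at hsc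
    nlinarith [mul_pos hμ (breg_pos hh hy₀ hxstar hne (hh' _ hxstar))]
  by_cases hstar : f xstar = 0
  · have hy₀int : Integrable (fun ξ => fs ξ y₀) ν := by
      refine Integrable.of_integral_ne_zero ?_
      rw [← hf, ← hstar]
      exact hgap.symm
    exact (hy₀int.sub (hsub y₀ hy₀)).congr (ae_of_all _ fun ξ => sub_sub_cancel _ _)
  · exact Integrable.of_integral_ne_zero (by rwa [← hf])

theorem integral_breg_sample_eq [IsFiniteMeasure ν] (hμ : 0 < μ) (hsc : Convex ℝ s)
    (hh : StrictConvexOn ℝ s h) (hh' : ∀ x ∈ s, HasGradientAt h (h' x) x)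
    (hfsconv : ∀ ξ, ConvexOn ℝ s (fs ξ)) (hfsgrad : ∀ ξ, ∀ x ∈ s, HasGradientAt (fs ξ) (G ξ x) x)
    (hf : ∀ x, f x = ∫ ξ, fs ξ x ∂ν) (hf' : ∀ x, f' x = ∫ ξ, G ξ x ∂ν)
    (hrelsmooth : ∀ ξ, ∀ x ∈ s, ∀ y ∈ s, breg (fs ξ) (G ξ) x y ≤ L * breg h h' x y)
    (hrelsc : ∀ x ∈ s, ∀ y ∈ s, μ * breg h h' x y ≤ breg f f' x y) (hxstar : xstar ∈ s)
    (hcrit : f' xstar = 0) (hinterp : ∀ ξ, G ξ xstar = 0) {y₀ : E d} (hy₀ : y₀ ∈ s)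
    (hne : y₀ ≠ xstar) {x : E d} (hx : x ∈ s) :
    ∫ ξ, breg (fs ξ) (G ξ) xstar x ∂ν = breg f f' xstar x := by
  have hGint : ∀ y ∈ s, Integrable (fun ξ => G ξ y) ν := fun y hy =>
    integrable_sample_gradient hμ hh hh' hf' hrelsc hxstar hcrit hinterp hy
  have hfsint : ∀ y ∈ s, Integrable (fun ξ => fs ξ y) ν := fun y hy =>
    integrable_sample_value hμ hh hh' hf hrelsc hxstar hcrit
      (fun z hz => integrable_sample_sub hsc hfsconv hfsgrad hGint hrelsmooth hxstar hinterp hz)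
      hy₀ hne hy
  exact integral_breg_eq hf hf' (hfsint _ hxstar) (hfsint _ hx) (hGint _ hx)

theorem le_of_relStrongConvex_of_relSmooth [IsProbabilityMeasure ν] {x y : E d}
    (hpos : 0 < breg h h' x y) (hsc : μ * breg h h' x y ≤ breg f f' x y)
    (hmean : ∫ ξ, breg (fs ξ) (G ξ) x y ∂ν = breg f f' x y)
    (hnonneg : ∀ ξ, 0 ≤ breg (fs ξ) (G ξ) x y)
    (hsmooth : ∀ ξ, breg (fs ξ) (G ξ) x y ≤ L * breg h h' x y) : μ ≤ L := by
  have hbound : ∫ ξ, breg (fs ξ) (G ξ) x y ∂ν ≤ L * breg h h' x y := by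
    simpa using integral_mono_of_nonneg (ae_of_all _ hnonneg)
      (integrable_const (μ := ν) (L * breg h h' x y)) (ae_of_all _ hsmooth)
  exact le_of_mul_le_mul_right (by linarith) hpos

theorem integral_breg_step_le {Ω : Type*} [MeasurableSpace Ω] {P : Measure Ω}
    [IsProbabilityMeasure P] [IsProbabilityMeasure ν] {η : ℝ} (hs : IsOpen s)
    (hsc : Convex ℝ s) (hh : ConvexOn ℝ s h) (hh' : ∀ x ∈ s, HasGradientAt h (h' x) x)
    (hfsconv : ∀ ξ, ConvexOn ℝ s (fs ξ)) (hfsgrad : ∀ ξ, ∀ x ∈ s, HasGradientAt (fs ξ) (G ξ x) x)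
    (hGint : ∀ x ∈ s, Integrable (fun ξ => G ξ x) ν)
    (hrelsmooth : ∀ ξ, ∀ x ∈ s, ∀ y ∈ s, breg (fs ξ) (G ξ) x y ≤ L * breg h h' x y)
    (hmean : ∀ x ∈ s, μ * breg h h' xstar x ≤ ∫ ξ, breg (fs ξ) (G ξ) xstar x ∂ν)
    (hxstar : xstar ∈ s) (hinterp : ∀ ξ, G ξ xstar = 0) (hη0 : 0 < η) (hηL : η * L ≤ 1)
    {X X' : Ω → E d} {Y : Ω → Ξ} (hXs : ∀ ω, X ω ∈ s) (hX's : ∀ ω, X' ω ∈ s)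
    (hupdate : ∀ ω, h' (X' ω) = h' (X ω) - η • G (Y ω) (X ω)) (hXY : IndepFun X Y P)
    (hlaw : P.map Y = ν) (hX : AEMeasurable X P) (hY : AEMeasurable Y P)
    (hint : Integrable (fun ω => breg h h' xstar (X ω)) P)
    (hint' : Integrable (fun ω => breg h h' xstar (X' ω)) P) :
    ∫ ω, breg h h' xstar (X' ω) ∂P ≤ (1 - η * μ) * ∫ ω, breg h h' xstar (X ω) ∂P := by
  set φ : E d × Ξ → ℝ := fun p => breg (fs p.2) (G p.2) xstar p.1
  have hdescent : ∀ ω, η * φ (X ω, Y ω) ≤ breg h h' xstar (X ω) - breg h h' xstar (X' ω) :=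
    fun ω => mul_breg_le_of_mirror_step hh (hfsconv _) (hXs ω) (hX's ω) hxstar (hh' _ (hXs ω))
      (hinterp (Y ω) ▸ hfsgrad _ _ hxstar) (hrelsmooth _ _ (hX's ω) _ (hXs ω)) hη0.le hηL
      (hupdate ω)
  have hφ : AEStronglyMeasurable φ ((P.map X).prod (P.map Y)) := by
    rw [hlaw]
    exact aestronglyMeasurable_breg_uncurry hs hsc hfsconv hfsgrad (fun x hx => (hGint x hx).1)
      hxstar ((ae_map_iff hX hs.measurableSet).2 (ae_of_all _ hXs))
  have hφint : Integrable (fun ω => φ (X ω, Y ω)) P := by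
    have hprod : P.map (fun ω => (X ω, Y ω)) = (P.map X).prod (P.map Y) :=
      (indepFun_iff_map_prod_eq_prod_map_map hX hY).1 hXY
    refine ((hint.sub hint').const_mul η⁻¹).mono' ((hprod ▸ hφ).comp_aemeasurable
      (hX.prodMk hY)) (ae_of_all _ fun ω => ?_)
    have hnonneg : 0 ≤ φ (X ω, Y ω) :=
      breg_nonneg (hfsconv _) hxstar (hXs ω) (hfsgrad _ _ (hXs ω))
    rw [Real.norm_of_nonneg hnonneg, le_inv_mul_iff₀ hη0]
    exact hdescent ω
  have hexpect : ∫ ω, μ * breg h h' xstar (X ω) ∂P ≤ ∫ ω, φ (X ω, Y ω) ∂P :=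
    hXY.integral_comp_le_integral_comp_prod (ψ := fun x => μ * breg h h' xstar x) hX hY hφ
      hφint (hint.const_mul μ) (ae_of_all _ fun ω => hlaw ▸ hmean _ (hXs ω))
  have hmono : ∫ ω, breg h h' xstar (X' ω) ∂P
      ≤ ∫ ω, breg h h' xstar (X ω) ∂P - η * ∫ ω, φ (X ω, Y ω) ∂P := by
    rw [← integral_const_mul, ← integral_sub hint (hφint.const_mul η)]
    exact integral_mono hint' (hint.sub (hφint.const_mul η)) fun ω => by linarith [hdescent ω]
  rw [integral_const_mul] at hexpect
  nlinarith

end SampleFamily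

theorem bsgd_interpolation_linear_general {d : ℕ}
    (C : Set (E d)) (hCconv : Convex ℝ C)
    (h f : E d → ℝ) (h' f' : E d → E d)
    (hhsc : StrictConvexOn ℝ (interior C) h)
    (hh' : ∀ x ∈ interior C, HasGradientAt h (h' x) x)
    {Ξ : Type*} [MeasurableSpace Ξ] (ν : Measure Ξ) [IsProbabilityMeasure ν]
    (fs : Ξ → E d → ℝ) (G : Ξ → E d → E d)
    (L μ η : ℝ) (hL : 0 < L) (hμ : 0 < μ)
    (hfsconv : ∀ ξ, ConvexOn ℝ C (fs ξ))
    (hfsgrad : ∀ ξ, ∀ x ∈ interior C, HasGradientAt (fs ξ) (G ξ x) x)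
    (hrelsmooth : ∀ ξ, ∀ x ∈ interior C, ∀ y ∈ interior C,
      breg (fs ξ) (G ξ) x y ≤ L * breg h h' x y)
    (hfdef : ∀ x : E d, f x = ∫ ξ, fs ξ x ∂ν)
    (hf'def : ∀ x : E d, f' x = ∫ ξ, G ξ x ∂ν)
    (hrelsc : ∀ x ∈ interior C, ∀ y ∈ interior C,
      μ * breg h h' x y ≤ breg f f' x y)
    (xstar x0 : E d) (hxstar : xstar ∈ interior C) (hx0 : x0 ∈ interior C)
    (hcrit : f' xstar = 0)
    (hinterp : ∀ ξ, G ξ xstar = 0)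
    (hη0 : 0 < η) (hη : η ≤ 1 / (2 * L))
    {Ω : Type*} [MeasurableSpace Ω] (P : Measure Ω) [IsProbabilityMeasure P]
    (X : ℕ → Ω → E d) (ξs : ℕ → Ω → Ξ)
    (hX0 : ∀ ω, X 0 ω = x0)
    (hXmem : ∀ t ω, X t ω ∈ interior C)
    (hupdate : ∀ t ω, h' (X (t + 1) ω) = h' (X t ω) - η • G (ξs t ω) (X t ω))
    (hindep : ∀ t, IndepFun (X t) (ξs t) P)
    (hlaw : ∀ t, Measure.map (ξs t) P = ν)
    (hXmeas : ∀ t, AEMeasurable (X t) P) (hξmeas : ∀ t, AEMeasurable (ξs t) P)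
    (hint : ∀ t, Integrable (fun ω => breg h h' xstar (X t ω)) P) :
    ∀ t, ∫ ω, breg h h' xstar (X t ω) ∂P
      ≤ (1 - η * μ) ^ t * breg h h' xstar x0 := by
  rcases Set.eq_singleton_or_nontrivial hxstar with hdeg | hnontriv
  · intro t
    have hXt : ∀ ω, X t ω = xstar := fun ω => by simpa [hdeg] using hXmem t ω
    have hx0' : x0 = xstar := by simpa [hdeg] using hx0
    simp [hXt, hx0', breg]
  obtain ⟨y₀, hy₀, hne⟩ := hnontriv.exists_ne xstar
  have hSc : Convex ℝ (interior C) := hCconv.interior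
  have hfsconv' : ∀ ξ, ConvexOn ℝ (interior C) (fs ξ) := fun ξ =>
    (hfsconv ξ).subset interior_subset hSc
  have hmean : ∀ x ∈ interior C, ∫ ξ, breg (fs ξ) (G ξ) xstar x ∂ν = breg f f' xstar x :=
    fun x hx => integral_breg_sample_eq hμ hSc hhsc hh' hfsconv' hfsgrad hfdef hf'def hrelsmooth
      hrelsc hxstar hcrit hinterp hy₀ hne hx
  have hμL : μ ≤ L := le_of_relStrongConvex_of_relSmooth
    (breg_pos hhsc hxstar hy₀ hne.symm (hh' _ hy₀)) (hrelsc _ hxstar _ hy₀) (hmean _ hy₀)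
    (fun ξ => breg_nonneg (hfsconv' ξ) hxstar hy₀ (hfsgrad ξ _ hy₀))
    (fun ξ => hrelsmooth ξ _ hxstar _ hy₀)
  have hηL : η * L ≤ 1 := by
    rw [le_div_iff₀ (by positivity)] at hη
    linarith
  have hstep : ∀ t, ∫ ω, breg h h' xstar (X (t + 1) ω) ∂P
      ≤ (1 - η * μ) * ∫ ω, breg h h' xstar (X t ω) ∂P := fun t =>
    integral_breg_step_le isOpen_interior hSc hhsc.convexOn hh' hfsconv' hfsgrad
      (fun x hx => integrable_sample_gradient hμ hhsc hh' hf'def hrelsc hxstar hcrit hinterp hx)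
      hrelsmooth (fun x hx => hmean x hx ▸ hrelsc _ hxstar _ hx) hxstar hinterp hη0 hηL
      (hXmem t) (hXmem (t + 1)) (hupdate t) (hindep t) (hlaw t) (hXmeas t) (hξmeas t) (hint t)
      (hint (t + 1))
  intro t
  simpa [hX0] using le_geom (u := fun t => ∫ ω, breg h h' xstar (X t ω) ∂P)
    (by nlinarith [mul_le_mul_of_nonneg_left hμL hη0.le]) t fun k _ => hstep k

/-- **Interpolation: linear convergence of Bregman SGD.** If
`∇f_ξ(x*) = 0` for all `ξ` (so `σ² = 0`), each `f_ξ` is convex and `L`-relatively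
smooth w.r.t. `h`, `f` is `μ`-relatively strongly convex with `μ > 0`, and
`0 < η ≤ 1/(2L)`, then Bregman SGD started at `x₀` with i.i.d. samples
`ξ_t ∼ ν` (each `ξ_t` independent of the current iterate) satisfies
`E[D_h(x*, x_t)] ≤ (1 - ημ)^t D_h(x*, x₀)`. -/
theorem bsgd_interpolation_linear {d : ℕ}
    (C : Set (E d)) (hC : IsClosed C) (hCconv : Convex ℝ C)
    (h f : E d → ℝ) (h' f' : E d → E d)
    (hh2 : ContDiffOn ℝ 2 h (interior C))
    (hhsc : StrictConvexOn ℝ (interior C) h)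
    (hh' : ∀ x ∈ interior C, HasGradientAt h (h' x) x)
    (hblanket : ∀ y : E d, ∃! z, z ∈ interior C ∧
      IsMinOn (fun u => h u - (inner ℝ u y : ℝ)) C z)
    {Ξ : Type*} [MeasurableSpace Ξ] (ν : Measure Ξ) [IsProbabilityMeasure ν]
    (fs : Ξ → E d → ℝ) (G : Ξ → E d → E d)
    (L μ η : ℝ) (hL : 0 < L) (hμ : 0 < μ)
    (hfsconv : ∀ ξ, ConvexOn ℝ C (fs ξ))
    (hfsgrad : ∀ ξ, ∀ x ∈ interior C, HasGradientAt (fs ξ) (G ξ x) x)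
    (hrelsmooth : ∀ ξ, ∀ x ∈ interior C, ∀ y ∈ interior C,
      breg (fs ξ) (G ξ) x y ≤ L * breg h h' x y)
    (hfdef : ∀ x : E d, f x = ∫ ξ, fs ξ x ∂ν)
    (hf'def : ∀ x : E d, f' x = ∫ ξ, G ξ x ∂ν)
    (hrelsc : ∀ x ∈ interior C, ∀ y ∈ interior C,
      μ * breg h h' x y ≤ breg f f' x y)
    (xstar x0 : E d) (hxstar : xstar ∈ interior C) (hx0 : x0 ∈ interior C)
    (hcrit : f' xstar = 0)
    (hinterp : ∀ ξ, G ξ xstar = 0)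
    (hη0 : 0 < η) (hη : η ≤ 1 / (2 * L))
    {Ω : Type*} [MeasurableSpace Ω] (P : Measure Ω) [IsProbabilityMeasure P]
    (X : ℕ → Ω → E d) (ξs : ℕ → Ω → Ξ)
    (hX0 : ∀ ω, X 0 ω = x0)
    (hXmem : ∀ t ω, X t ω ∈ interior C)
    (hupdate : ∀ t ω, h' (X (t + 1) ω) = h' (X t ω) - η • G (ξs t ω) (X t ω))
    (hindep : ∀ t, IndepFun (X t) (ξs t) P)
    (hlaw : ∀ t, Measure.map (ξs t) P = ν)
    (hXmeas : ∀ t, AEMeasurable (X t) P) (hξmeas : ∀ t, AEMeasurable (ξs t) P)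
    (hint : ∀ t, Integrable (fun ω => breg h h' xstar (X t ω)) P) :
    ∀ t, ∫ ω, breg h h' xstar (X t ω) ∂P
      ≤ (1 - η * μ) ^ t * breg h h' xstar x0 :=
  bsgd_interpolation_linear_general C hCconv h f h' f' hhsc hh' ν fs G L μ η hL hμ hfsconv hfsgrad
    hrelsmooth hfdef hf'def hrelsc xstar x0 hxstar hx0 hcrit hinterp hη0 hη P X ξs hX0 hXmem hupdate
    hindep hlaw hXmeas hξmeas hint
end
end

section
/- Gain function for Lipschitz-Hessian conjugates: if h is L_h-smooth and ∇²h* is M-Lipschitz in operator norm, then for all x, y, v ∈ ℝ^d and λ ∈ [-1,1], D_{h*}(x + λv, x) ≤ λ² (1 + 2 M L_h (‖y - x‖ + ‖v‖)) D_{h*}(y + v, y). -/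
open Set
noncomputable section

open scoped RealInnerProductSpace

/-!
Compare `g t = D_{h*}(x + tλv, x)` with `G t = λ² D_{h*}(y + tv, y)` on `[0, 1]`. Both vanish at
`0` together with their first derivatives, and their second derivatives are `λ²⟪∇²h*(·)v, v⟫` at
two points `x + tλv`, `y + tv` at distance at most `‖y - x‖ + 2‖v‖`, so they differ by at most
`K = λ² M (‖y - x‖ + 2‖v‖) ‖v‖²`. Hence `G + K t²/2 - g` is convex with a double zero at `0`,
giving `D_{h*}(x + λv, x) ≤ λ² D_{h*}(y + v, y) + K/2`, and strong convexity
`‖v‖² ≤ 2 L_h D_{h*}(y + v, y)` absorbs `K/2` into the gain factor.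
-/

theorem monotoneOn_Icc_of_hasDerivAt_nonneg {f f' : ℝ → ℝ} {a b : ℝ}
    (hf : ∀ t ∈ Icc a b, HasDerivAt f (f' t) t) (hf' : ∀ t ∈ Ioo a b, 0 ≤ f' t) :
    MonotoneOn f (Icc a b) := by
  refine monotoneOn_of_hasDerivWithinAt_nonneg (f' := f') (convex_Icc a b)
    (fun t ht => (hf t ht).continuousAt.continuousWithinAt) (fun t ht => ?_) ?_
  · rw [interior_Icc] at ht ⊢
    exact (hf t (Ioo_subset_Icc_self ht)).hasDerivWithinAt
  · rwa [interior_Icc]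

theorem nonneg_of_hasDerivAt_hasDerivAt_nonneg {φ φ' φ'' : ℝ → ℝ} {a b : ℝ} (hab : a ≤ b)
    (hφ : ∀ t ∈ Icc a b, HasDerivAt φ (φ' t) t) (hφ' : ∀ t ∈ Icc a b, HasDerivAt φ' (φ'' t) t)
    (hφ'' : ∀ t ∈ Ioo a b, 0 ≤ φ'' t) (h₀ : φ a = 0) (h₀' : φ' a = 0) :
    0 ≤ φ b := by
  have ha : a ∈ Icc a b := left_mem_Icc.mpr hab
  have hφ'_nonneg : ∀ t ∈ Ioo a b, 0 ≤ φ' t := fun t ht =>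
    h₀' ▸ monotoneOn_Icc_of_hasDerivAt_nonneg hφ' hφ'' ha (Ioo_subset_Icc_self ht) ht.1.le
  exact h₀ ▸ monotoneOn_Icc_of_hasDerivAt_nonneg hφ hφ'_nonneg ha (right_mem_Icc.mpr hab) hab

theorem hasDerivAt_const_add_smul {F : Type*} [NormedAddCommGroup F] [NormedSpace ℝ F]
    (c u : F) (t : ℝ) : HasDerivAt (fun s : ℝ => c + s • u) u t := by
  simpa using ((hasDerivAt_id t).smul_const u).const_add c

section Line

variable {F : Type*} [NormedAddCommGroup F] [InnerProductSpace ℝ F]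

theorem hasDerivAt_inner_sub_line {g : F → F} {g' : F →L[ℝ] F} {c u : F} {t : ℝ}
    (hg : HasFDerivAt g g' (c + t • u)) :
    HasDerivAt (fun s : ℝ => ⟪g (c + s • u) - g c, u⟫) ⟪g' u, u⟫ t := by
  simpa using ((hg.comp_hasDerivAt t (hasDerivAt_const_add_smul c u t)).sub_const (g c)).inner ℝ
    (hasDerivAt_const t u)

theorem real_inner_le_inner_add_norm_sub_mul (p q u : F) : ⟪p, u⟫ ≤ ⟪q, u⟫ + ‖p - q‖ * ‖u‖ := by
  have := real_inner_le_norm (p - q) u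
  rw [inner_sub_left] at this
  linarith

theorem norm_add_smul_smul_sub_add_smul_le (x y v : F) {l t : ℝ} (hl : l ∈ Icc (-1 : ℝ) 1)
    (ht : t ∈ Icc (0 : ℝ) 1) : ‖(x + t • l • v) - (y + t • v)‖ ≤ ‖y - x‖ + 2 * ‖v‖ := by
  obtain ⟨hl₁, hl₂⟩ := hl
  obtain ⟨ht₀, ht₁⟩ := ht
  have hcoef : |t * (l - 1)| ≤ 2 := by
    rw [abs_le]
    constructor <;> nlinarith
  calc ‖(x + t • l • v) - (y + t • v)‖ = ‖(x - y) + (t * (l - 1)) • v‖ := by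
        congr 1
        module
    _ ≤ ‖x - y‖ + |t * (l - 1)| * ‖v‖ := by
        grw [norm_add_le, norm_smul, Real.norm_eq_abs]
    _ ≤ ‖y - x‖ + 2 * ‖v‖ := by
        rw [norm_sub_rev]
        gcongr

theorem inner_apply_line_le_of_lipschitz {H : F → F →L[ℝ] F} {M : ℝ} (hM : 0 ≤ M)
    (hlip : ∀ a b u : F, ‖H a u - H b u‖ ≤ M * ‖a - b‖ * ‖u‖) (x y v : F) {l t : ℝ}
    (hl : l ∈ Icc (-1 : ℝ) 1) (ht : t ∈ Icc (0 : ℝ) 1) :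
    ⟪H (x + t • l • v) (l • v), l • v⟫
      ≤ l ^ 2 * ⟪H (y + t • v) v, v⟫ + l ^ 2 * (M * (‖y - x‖ + 2 * ‖v‖) * ‖v‖ ^ 2) := by
  set a := x + t • l • v
  set b := y + t • v
  calc ⟪H a (l • v), l • v⟫ = l ^ 2 * ⟪H a v, v⟫ := by
        simp only [map_smul, inner_smul_left, inner_smul_right, conj_trivial]
        ring
    _ ≤ l ^ 2 * (⟪H b v, v⟫ + ‖H a v - H b v‖ * ‖v‖) := by
        grw [real_inner_le_inner_add_norm_sub_mul (H a v) (H b v) v]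
    _ ≤ l ^ 2 * (⟪H b v, v⟫ + M * (‖y - x‖ + 2 * ‖v‖) * ‖v‖ * ‖v‖) := by
        grw [hlip a b v, norm_add_smul_smul_sub_add_smul_le x y v hl ht]
    _ = l ^ 2 * ⟪H b v, v⟫ + l ^ 2 * (M * (‖y - x‖ + 2 * ‖v‖) * ‖v‖ ^ 2) := by ring

end Line

section Bregman

variable {d : ℕ} {f : E d → ℝ} {f' : E d → E d} {f'' : E d → E d →L[ℝ] E d}

theorem hasDerivAt_breg_line {c u : E d} {t : ℝ}
    (hf : HasGradientAt f (f' (c + t • u)) (c + t • u)) :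
    HasDerivAt (fun s : ℝ => breg f f' (c + s • u) c) ⟪f' (c + t • u) - f' c, u⟫ t := by
  have hbreg : (fun s : ℝ => breg f f' (c + s • u) c)
      = fun s => f (c + s • u) - f c - s * ⟪f' c, u⟫ := by
    funext s
    simp [breg, inner_smul_right]
  rw [hbreg, inner_sub_left]
  exact (((hf.hasFDerivAt.comp_hasDerivAt t (hasDerivAt_const_add_smul c u t)).sub_const
    (f c)).sub ((hasDerivAt_id t).mul_const ⟪f' c, u⟫)).congr_deriv (by simp)

theorem breg_le_of_inner_hessian_le (hf : ∀ p, HasGradientAt f (f' p) p)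
    (hf' : ∀ p, HasFDerivAt f' (f'' p) p) {c₁ u₁ c₂ u₂ : E d} {a K : ℝ}
    (h : ∀ t ∈ Ioo (0 : ℝ) 1, ⟪f'' (c₁ + t • u₁) u₁, u₁⟫ ≤ a * ⟪f'' (c₂ + t • u₂) u₂, u₂⟫ + K) :
    breg f f' (c₁ + u₁) c₁ ≤ a * breg f f' (c₂ + u₂) c₂ + K / 2 := by
  have key := nonneg_of_hasDerivAt_hasDerivAt_nonneg zero_le_one
    (φ := fun t => a * breg f f' (c₂ + t • u₂) c₂ + K * t ^ 2 / 2 - breg f f' (c₁ + t • u₁) c₁)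
    (φ' := fun t => a * ⟪f' (c₂ + t • u₂) - f' c₂, u₂⟫ + K * t - ⟪f' (c₁ + t • u₁) - f' c₁, u₁⟫)
    (φ'' := fun t => a * ⟪f'' (c₂ + t • u₂) u₂, u₂⟫ + K - ⟪f'' (c₁ + t • u₁) u₁, u₁⟫)
    (fun t _ => by
      have hq : HasDerivAt (fun s : ℝ => K * s ^ 2 / 2) (K * t) t := by
        simpa [mul_comm, mul_assoc, mul_div_assoc] using
          ((hasDerivAt_pow 2 t).const_mul K).div_const 2
      exact (((hasDerivAt_breg_line (hf _)).const_mul a).add hq).sub (hasDerivAt_breg_line (hf _)))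
    (fun t _ => ((((hasDerivAt_inner_sub_line (hf' _)).const_mul a).add
        ((hasDerivAt_id t).const_mul K)).sub (hasDerivAt_inner_sub_line (hf' _))).congr_deriv
        (by simp))
    (fun t ht => sub_nonneg.mpr (h t ht)) (by simp [breg]) (by simp)
  simp only [one_smul, one_pow, mul_one] at key
  linarith

end Bregman

/-- **Gain function for Lipschitz-Hessian conjugates.** If `h` is
`L_h`-smooth (so that `h*` is `(1/L_h)`-strongly convex, i.e.
`‖v‖² ≤ 2 L_h D_{h*}(y+v, y)`) and `∇²h*` is `M`-Lipschitz in operator norm,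
then for all `x, y, v ∈ ℝ^d` and `λ ∈ [-1,1]`,
`D_{h*}(x + λv, x) ≤ λ² (1 + 2 M L_h (‖y - x‖ + ‖v‖)) D_{h*}(y + v, y)`. -/
theorem gain_function_lipschitz_hessian {d : ℕ}
    (hstar : E d → ℝ) (hstar' : E d → E d) (hstar'' : E d → E d →L[ℝ] E d)
    (Lh M : ℝ) (hLh : 0 < Lh) (hM : 0 ≤ M)
    (hgrad : ∀ a : E d, HasGradientAt hstar (hstar' a) a)
    (hhess : ∀ a : E d, HasFDerivAt hstar' (hstar'' a) a)
    (hlip : ∀ a b u : E d, ‖hstar'' a u - hstar'' b u‖ ≤ M * ‖a - b‖ * ‖u‖)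
    (hsc : ∀ y v : E d, ‖v‖ ^ 2 ≤ 2 * Lh * breg hstar hstar' (y + v) y)
    (x y v : E d) (l : ℝ) (hl : l ∈ Set.Icc (-1 : ℝ) 1) :
    breg hstar hstar' (x + l • v) x
      ≤ l ^ 2 * (1 + 2 * M * Lh * (‖y - x‖ + ‖v‖)) * breg hstar hstar' (y + v) y := by
  set D := breg hstar hstar' (y + v) y
  have hv : ‖v‖ ^ 2 ≤ 2 * Lh * D := hsc y v
  have hD : 0 ≤ D := by nlinarith [sq_nonneg ‖v‖]
  have hgap : 0 ≤ l ^ 2 * M * Lh * ‖y - x‖ * D := by positivity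
  calc breg hstar hstar' (x + l • v) x
      ≤ l ^ 2 * D + l ^ 2 * (M * (‖y - x‖ + 2 * ‖v‖) * ‖v‖ ^ 2) / 2 :=
        breg_le_of_inner_hessian_le hgrad hhess fun t ht =>
          by simpa only [smul_smul] using
            inner_apply_line_le_of_lipschitz hM hlip x y v hl (Ioo_subset_Icc_self ht)
    _ ≤ l ^ 2 * D + l ^ 2 * (M * (‖y - x‖ + 2 * ‖v‖) * (2 * Lh * D)) / 2 := by grw [hv]
    _ ≤ l ^ 2 * (1 + 2 * M * Lh * (‖y - x‖ + ‖v‖)) * D := by linarith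
end
end

section
/- Relative smoothness of the Poisson likelihood with sparse measurement matrix: the objective f(x) = (1/n) Σ_{i=1}^n [b_i log(b_i/(A_i^T x)) - b_i + A_i^T x], with A having nonnegative entries and b_i ≥ 0, is L-relatively smooth with respect to the log-barrier h(x) = -Σ_{j=1}^d log x_j on the positive orthant, for any L ≥ (1/n) max_{j∈{1..d}} Σ_{i ∈ S_j} b_i, where S_j = {i : A_{ij} ≠ 0}. -/
open Finset
noncomputable section

/-- **Relative smoothness of the Poisson likelihood with a sparse
measurement matrix.** For `A ∈ ℝ₊^{n×d}`, `b ∈ ℝ₊^n`, the Poisson objective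
`f(x) = (1/n) Σᵢ [bᵢ log(bᵢ/(Aᵢᵀx)) - bᵢ + Aᵢᵀx]` is `L`-relatively smooth with
respect to the log-barrier `h(x) = -Σⱼ log xⱼ` on the positive orthant whenever
`L ≥ (1/n) maxⱼ Σ_{i ∈ Sⱼ} bᵢ` with `Sⱼ = {i : A_{ij} ≠ 0}`.  Relative
`L`-smoothness is expressed in the equivalent Hessian form
`uᵀ∇²f(x)u = (1/n) Σᵢ bᵢ (Aᵢᵀu)²/(Aᵢᵀx)² ≤ L Σⱼ uⱼ²/xⱼ² = L uᵀ∇²h(x)u`. -/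
theorem poisson_relative_smoothness {n dd : ℕ} (hn : 0 < n)
    (A : Fin n → Fin dd → ℝ) (b : Fin n → ℝ)
    (hA : ∀ i j, 0 ≤ A i j) (hb : ∀ i, 0 ≤ b i)
    (L : ℝ)
    (hL : ∀ j : Fin dd,
      (1 / (n : ℝ)) * ∑ i ∈ Finset.univ.filter (fun i => A i j ≠ 0), b i ≤ L)
    (x : Fin dd → ℝ) (hx : ∀ j, 0 < x j)
    (hAx : ∀ i, 0 < ∑ j, A i j * x j)
    (u : Fin dd → ℝ) :
    (1 / (n : ℝ)) * ∑ i, b i * (∑ j, A i j * u j) ^ 2 / (∑ j, A i j * x j) ^ 2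
      ≤ L * ∑ j, (u j) ^ 2 / (x j) ^ 2 := by
  have hn' : (0 : ℝ) < n := by exact_mod_cast hn
  -- Step 1: per-row Cauchy–Schwarz
  have key : ∀ i, b i * (∑ j, A i j * u j) ^ 2 / (∑ j, A i j * x j) ^ 2
      ≤ ∑ j, b i * (A i j * u j ^ 2 / x j) / (∑ j', A i j' * x j') := by
    intro i
    set S := ∑ j, A i j * x j with hS
    have hSpos : 0 < S := hAx i
    have hCS : (∑ j, A i j * u j) ^ 2 ≤ S * ∑ j, A i j * u j ^ 2 / x j := by
      apply Finset.sum_sq_le_sum_mul_sum_of_sq_eq_mul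
      · intro j _; exact mul_nonneg (hA i j) (hx j).le
      · intro j _
        exact div_nonneg (mul_nonneg (hA i j) (sq_nonneg _)) (hx j).le
      · intro j _
        have hxj := (hx j).ne'
        field_simp
    have hsum : ∑ j, b i * (A i j * u j ^ 2 / x j) / S
        = b i * (∑ j, A i j * u j ^ 2 / x j) / S := by
      rw [← Finset.sum_div, ← Finset.mul_sum]
    rw [hsum]
    rw [div_le_div_iff₀ (by positivity) hSpos]
    calc b i * (∑ j, A i j * u j) ^ 2 * S
        ≤ b i * (S * ∑ j, A i j * u j ^ 2 / x j) * S := by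
          have := mul_le_mul_of_nonneg_left hCS (hb i)
          exact mul_le_mul_of_nonneg_right this hSpos.le
      _ = b i * (∑ j, A i j * u j ^ 2 / x j) * S ^ 2 := by ring
  -- Step 2: sum over i and swap sums
  have step2 : ∑ i, b i * (∑ j, A i j * u j) ^ 2 / (∑ j, A i j * x j) ^ 2
      ≤ ∑ j, ∑ i, b i * (A i j * u j ^ 2 / x j) / (∑ j', A i j' * x j') := by
    rw [Finset.sum_comm]
    exact Finset.sum_le_sum fun i _ => key i
  -- Step 3: per-column bound
  have step3 : ∀ j : Fin dd,
      ∑ i, b i * (A i j * u j ^ 2 / x j) / (∑ j', A i j' * x j')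
        ≤ ((n : ℝ) * L) * (u j ^ 2 / x j ^ 2) := by
    intro j
    have h1 : ∑ i, b i * (A i j * u j ^ 2 / x j) / (∑ j', A i j' * x j')
        = ∑ i ∈ Finset.univ.filter (fun i => A i j ≠ 0),
            b i * (A i j * u j ^ 2 / x j) / (∑ j', A i j' * x j') := by
      rw [Finset.sum_filter]
      apply Finset.sum_congr rfl
      intro i _
      by_cases h : A i j = 0
      · simp [h]
      · simp [h]
    rw [h1]
    have h2 : ∑ i ∈ Finset.univ.filter (fun i => A i j ≠ 0),
          b i * (A i j * u j ^ 2 / x j) / (∑ j', A i j' * x j')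
        ≤ ∑ i ∈ Finset.univ.filter (fun i => A i j ≠ 0), b i * (u j ^ 2 / x j ^ 2) := by
      apply Finset.sum_le_sum
      intro i _
      have hSpos := hAx i
      have hAij : A i j * x j ≤ ∑ j', A i j' * x j' := by
        apply Finset.single_le_sum (f := fun j' => A i j' * x j')
        · intro j' _; exact mul_nonneg (hA i j') (hx j').le
        · exact Finset.mem_univ j
      rw [div_le_iff₀ hSpos]
      have : b i * (u j ^ 2 / x j ^ 2) * (∑ j', A i j' * x j')
          ≥ b i * (u j ^ 2 / x j ^ 2) * (A i j * x j) := by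
        apply mul_le_mul_of_nonneg_left hAij
        exact mul_nonneg (hb i) (by positivity)
      refine le_trans (le_of_eq ?_) this
      have hxj := (hx j).ne'
      field_simp
    refine h2.trans ?_
    rw [← Finset.sum_mul]
    apply mul_le_mul_of_nonneg_right _ (by positivity)
    have := hL j
    calc ∑ i ∈ Finset.univ.filter (fun i => A i j ≠ 0), b i
        = (n : ℝ) * ((1 / (n : ℝ)) * ∑ i ∈ Finset.univ.filter (fun i => A i j ≠ 0), b i) := by
          field_simp
      _ ≤ (n : ℝ) * L := by
          exact mul_le_mul_of_nonneg_left this hn'.le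
  -- combine
  calc (1 / (n : ℝ)) * ∑ i, b i * (∑ j, A i j * u j) ^ 2 / (∑ j, A i j * x j) ^ 2
      ≤ (1 / (n : ℝ)) * ∑ j, ∑ i, b i * (A i j * u j ^ 2 / x j) / (∑ j', A i j' * x j') := by
        apply mul_le_mul_of_nonneg_left step2 (by positivity)
    _ ≤ (1 / (n : ℝ)) * ∑ j, ((n : ℝ) * L) * (u j ^ 2 / x j ^ 2) := by
        apply mul_le_mul_of_nonneg_left (Finset.sum_le_sum fun j _ => step3 j) (by positivity)
    _ = L * ∑ j, u j ^ 2 / x j ^ 2 := by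
        rw [← Finset.mul_sum]
        field_simp
end
end

section
/- SAGA one-step Lyapunov contraction for quadratic h: suppose ∇²h is a constant positive definite matrix, each fᵢ is L-relatively smooth w.r.t. h, f = (1/n)Σfᵢ is μ-relatively strongly convex with μ > 0, ∇f(x*) = 0, and the Bregman-SAGA update is run with constant step η = 1/(8L). Then the potential ψ_t = (1/η) D_h(x*, x_t) + (n/2) H_t satisfies E[ψ_{t+1}] ≤ (1 - min(μ/(8L), 1/(2n))) ψ_t, where H_t = (1/n)Σᵢ D_{f_i}(φᵢᵗ, x*). -/
open Finset
noncomputable section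

/-! Because `h` is quadratic, the mirror step is an explicit step in the geometry of `Q`: `D_h(x*,
x⁺) = D_h(x*, x) + η⟪g, x* - x⟫ + (η²/2)⟪g, Q⁻¹g⟫`. The SAGA estimator is unbiased, so summed over
`i` the middle terms give `-η Σᵢ (D_{fᵢ}(x, x*) + D_{fᵢ}(x*, x))`, and relative strong convexity
bounds the second half by `-η n μ D_h(x*, x)`. Convexity and relative smoothness give cocoercivity
`⟪∇fᵢz - ∇fᵢw, Q⁻¹(∇fᵢz - ∇fᵢw)⟫ ≤ 2L D_{fᵢ}(z, w)`, which, together with the fact that centring the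
table term does not increase its second moment, bounds the sum of the last terms by `2η²L Σᵢ
(D_{fᵢ}(x, x*) + D_{fᵢ}(φᵢ, x*))`. With `η = 1/(8L)` this costs `(1/(4n)) Σᵢ (D_{fᵢ}(x, x*) +
D_{fᵢ}(φᵢ, x*))` in the averaged potential, while replacing `φᵢ` by `x` for a uniformly random `i`
changes the table part by `(1/(2n)) Σᵢ (D_{fᵢ}(x, x*) - D_{fᵢ}(φᵢ, x*))`. The terms in `x` are
absorbed by `-(1/n) Σᵢ D_{fᵢ}(x, x*)`, leaving the factors `1 - μ/(8L)` and `1 - 1/(2n)`. -/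

open scoped RealInnerProductSpace

theorem sum_sum_apply_ite_eq {ι α : Type*} [Fintype ι] [DecidableEq ι] (F : ι → α → ℝ)
    (φ : ι → α) (x : α) :
    ∑ i, ∑ j, F j (if j = i then x else φ j)
      = (Fintype.card ι - 1) * ∑ j, F j (φ j) + ∑ j, F j x := by
  have hrow (i : ι) : ∑ j, F j (if j = i then x else φ j)
      = ∑ j, F j (φ j) + (F i x - F i (φ i)) := by
    have hsplit (j : ι) : F j (if j = i then x else φ j)
        = F j (φ j) + if j = i then F j x - F j (φ j) else 0 := by
      split_ifs <;> simp
    simp only [hsplit, sum_add_distrib, sum_ite_eq', mem_univ, if_true]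
  simp only [hrow, sum_add_distrib, sum_sub_distrib, sum_const, card_univ, nsmul_eq_mul]
  ring

section PositiveOperator

variable {F : Type*} [NormedAddCommGroup F] [InnerProductSpace ℝ F]

theorem LinearMap.exists_isPositive_inverse [FiniteDimensional ℝ F] {Q : F →ₗ[ℝ] F}
    (hQ : Q.IsSymmetric) (hQpos : ∀ u, u ≠ 0 → 0 < ⟪Q u, u⟫) :
    ∃ R : F →ₗ[ℝ] F, R.IsPositive ∧ (∀ v, Q (R v) = v) ∧ ∀ u, R (Q u) = u := by
  have hinj : Function.Injective Q := by
    refine (injective_iff_map_eq_zero Q).mpr fun u hu => ?_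
    by_contra hne
    simpa [hu] using hQpos u hne
  set e := LinearEquiv.ofInjectiveEndo Q hinj
  have hQR (v : F) : Q (e.symm v) = v := e.apply_symm_apply v
  refine ⟨e.symm, ⟨LinearMap.IsSymmetric.toLinearMap_symm hQ, fun v => ?_⟩, hQR,
    e.symm_apply_apply⟩
  rcases eq_or_ne (e.symm v) 0 with h0 | h0
  · simp [h0]
  · have := hQpos _ h0
    rw [hQR, real_inner_comm] at this
    exact this.le

theorem LinearMap.IsPositive.inner_sub_apply_sub_le {T : F →ₗ[ℝ] F} (hT : T.IsPositive)
    (u v : F) : ⟪u - v, T (u - v)⟫ ≤ 2 * ⟪u, T u⟫ + 2 * ⟪v, T v⟫ := by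
  have hsymm : ⟪v, T u⟫ = ⟪u, T v⟫ := by rw [← hT.isSymmetric, real_inner_comm]
  have := hT.inner_nonneg_right (u + v)
  simp only [map_add, map_sub, inner_add_left, inner_add_right, inner_sub_left,
    inner_sub_right] at this ⊢
  linarith

theorem LinearMap.IsPositive.sum_inner_sub_apply_sub_le {ι : Type*} [Fintype ι]
    {T : F →ₗ[ℝ] F} (hT : T.IsPositive) (b : ι → F) {m : F}
    (hm : ∑ i, b i = (Fintype.card ι : ℝ) • m) :
    ∑ i, ⟪b i - m, T (b i - m)⟫ ≤ ∑ i, ⟪b i, T (b i)⟫ := by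
  have hexpand (i : ι) : ⟪b i - m, T (b i - m)⟫
      = ⟪b i, T (b i)⟫ - 2 * ⟪b i, T m⟫ + ⟪m, T m⟫ := by
    have hsymm : ⟪m, T (b i)⟫ = ⟪b i, T m⟫ := by rw [← hT.isSymmetric, real_inner_comm]
    simp only [map_sub, inner_sub_left, inner_sub_right]
    linarith
  rw [Finset.sum_congr rfl fun i _ => hexpand i, sum_add_distrib, sum_sub_distrib, ← mul_sum,
    ← sum_inner, hm, real_inner_smul_left, sum_const, card_univ, nsmul_eq_mul]
  nlinarith [hT.inner_nonneg_right m, (Fintype.card ι).cast_nonneg (α := ℝ)]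

theorem LinearMap.IsPositive.sum_inner_saga_le {ι : Type*} [Fintype ι] {T : F →ₗ[ℝ] F}
    (hT : T.IsPositive) (G : ι → F → F) (φ : ι → F) {x xstar m : F}
    (hstar : ∑ i, G i xstar = 0) (hm : ∑ i, G i (φ i) = (Fintype.card ι : ℝ) • m) :
    ∑ i, ⟪G i x - G i (φ i) + m, T (G i x - G i (φ i) + m)⟫
      ≤ 2 * ∑ i, ⟪G i x - G i xstar, T (G i x - G i xstar)⟫
        + 2 * ∑ i, ⟪G i (φ i) - G i xstar, T (G i (φ i) - G i xstar)⟫ := by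
  set a := fun i => G i x - G i xstar
  set b := fun i => G i (φ i) - G i xstar
  have hg (i : ι) : G i x - G i (φ i) + m = a i - (b i - m) := by simp only [a, b]; abel
  have hb : ∑ i, b i = (Fintype.card ι : ℝ) • m := by simp [b, sum_sub_distrib, hstar, hm]
  calc ∑ i, ⟪G i x - G i (φ i) + m, T (G i x - G i (φ i) + m)⟫
      ≤ ∑ i, (2 * ⟪a i, T (a i)⟫ + 2 * ⟪b i - m, T (b i - m)⟫) := by
        gcongr with i
        rw [hg]
        exact hT.inner_sub_apply_sub_le _ _
    _ ≤ 2 * ∑ i, ⟪a i, T (a i)⟫ + 2 * ∑ i, ⟪b i, T (b i)⟫ := by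
        rw [sum_add_distrib, ← mul_sum, ← mul_sum]
        gcongr 2 * _ + 2 * ?_
        exact hT.sum_inner_sub_apply_sub_le b hb

end PositiveOperator

theorem ConvexOn.add_inner_le_of_hasGradientAt {F : Type*} [NormedAddCommGroup F]
    [InnerProductSpace ℝ F] [CompleteSpace F] {f : F → ℝ} {p y : F}
    (hf : ConvexOn ℝ Set.univ f) (hgrad : HasGradientAt f p y) (x : F) :
    f y + ⟪p, x - y⟫ ≤ f x := by
  set c : ℝ → F := ⇑(AffineMap.lineMap (k := ℝ) y x)
  have hline : ConvexOn ℝ Set.univ (f ∘ c) := by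
    simpa using hf.comp_affineMap (AffineMap.lineMap y x)
  have hderiv : HasDerivAt (f ∘ c) ⟪p, x - y⟫ 0 := by
    have hf' := hgrad.hasFDerivAt
    rw [← AffineMap.lineMap_apply_zero (k := ℝ) y x] at hf'
    simpa using hf'.comp_hasDerivAt (0 : ℝ) AffineMap.hasDerivAt_lineMap
  have := hline.le_slope_of_hasDerivAt (Set.mem_univ 0) (Set.mem_univ 1) zero_lt_one hderiv
  simp only [slope_def_field, Function.comp_apply, AffineMap.lineMap_apply_one,
    AffineMap.lineMap_apply_zero, sub_zero, div_one, c] at this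
  linarith

section Bregman

variable {d : ℕ}

theorem ConvexOn.breg_nonneg {f : E d → ℝ} {f' : E d → E d} {y : E d}
    (hf : ConvexOn ℝ Set.univ f) (hgrad : HasGradientAt f (f' y) y) (x : E d) :
    0 ≤ breg f f' x y := by
  have := hf.add_inner_le_of_hasGradientAt hgrad x
  rw [breg]
  linarith

theorem breg_add_breg (f : E d → ℝ) (f' : E d → E d) (x y z : E d) :
    breg f f' x z + breg f f' z y = breg f f' x y - ⟪f' z - f' y, x - z⟫ := by
  simp only [breg, inner_sub_left, inner_sub_right]
  ring

theorem breg_add_breg_swap (f : E d → ℝ) (f' : E d → E d) (x y : E d) :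
    breg f f' x y + breg f f' y x = ⟪f' x - f' y, x - y⟫ := by
  simp only [breg, inner_sub_left, inner_sub_right]
  ring

theorem breg_eq_of_forall_eq_mul_sum {ι : Type*} [Fintype ι] {fs : ι → E d → ℝ}
    {fs' : ι → E d → E d} {f : E d → ℝ} {f' : E d → E d} {c : ℝ}
    (hf : ∀ x, f x = c * ∑ i, fs i x) (hf' : ∀ x, f' x = c • ∑ i, fs' i x) (x y : E d) :
    breg f f' x y = c * ∑ i, breg (fs i) (fs' i) x y := by
  simp only [breg, hf, hf', real_inner_smul_left, sum_inner, sum_sub_distrib]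
  ring

theorem breg_eq_of_quadratic {Q : E d →ₗ[ℝ] E d} (hQ : Q.IsSymmetric) {h : E d → ℝ}
    {h' : E d → E d} (hh : ∀ x, h x = 1 / 2 * ⟪Q x, x⟫) (hh' : ∀ x, h' x = Q x) (x y : E d) :
    breg h h' x y = 1 / 2 * ⟪Q (x - y), x - y⟫ := by
  have hsymm : ⟪Q y, x⟫ = ⟪Q x, y⟫ := by rw [hQ, real_inner_comm]
  simp only [breg, hh, hh', map_sub, inner_sub_left, inner_sub_right]
  linarith

theorem breg_cocoercive {Q R : E d →ₗ[ℝ] E d} (hQR : ∀ v, Q (R v) = v) {f : E d → ℝ}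
    {f' : E d → E d} {L : ℝ} (hL : 0 < L) (hf : ConvexOn ℝ Set.univ f)
    (hgrad : ∀ x, HasGradientAt f (f' x) x)
    (hsmooth : ∀ x y, breg f f' x y ≤ L * (1 / 2 * ⟪Q (x - y), x - y⟫)) (z w : E d) :
    ⟪f' z - f' w, R (f' z - f' w)⟫ ≤ 2 * L * breg f f' z w := by
  set v := f' z - f' w
  -- test the smoothness at the point reached by a gradient step of length `1 / L` from `z`
  set z' := z - L⁻¹ • R v
  have hz' : z' - z = -(L⁻¹ • R v) := by simp [z']
  have hthree := breg_add_breg f f' z' w z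
  have hfar := hf.breg_nonneg (hgrad w) z'
  have hnear : breg f f' z' z ≤ L⁻¹ * ⟪v, R v⟫ / 2 := by
    have := hsmooth z' z
    simp only [hz', map_neg, map_smul, hQR, inner_neg_neg, real_inner_smul_left,
      real_inner_smul_right] at this
    convert this using 1
    field_simp
  rw [hz', inner_neg_right, real_inner_smul_right] at hthree
  have : L⁻¹ * ⟪v, R v⟫ / 2 ≤ breg f f' z w := by linarith
  calc ⟪v, R v⟫ = 2 * L * (L⁻¹ * ⟪v, R v⟫ / 2) := by field_simp
    _ ≤ 2 * L * breg f f' z w := by gcongr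

theorem breg_quadratic_mirror_step {Q R : E d →ₗ[ℝ] E d} (hQ : Q.IsSymmetric)
    (hRQ : ∀ u, R (Q u) = u) {h : E d → ℝ} {h' : E d → E d}
    (hh : ∀ x, h x = 1 / 2 * ⟪Q x, x⟫) (hh' : ∀ x, h' x = Q x) {η : ℝ} {x xnext g : E d}
    (hstep : Q xnext = Q x - η • g) (xstar : E d) :
    breg h h' xstar xnext = breg h h' xstar x + η * ⟪g, xstar - x⟫ + η ^ 2 / 2 * ⟪g, R g⟫ := by
  have hgrad : Q (x - xnext) = η • g := by rw [map_sub, hstep]; abel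
  have hdisp : x - xnext = η • R g := by rw [← hRQ (x - xnext), hgrad, map_smul]
  have hthree := breg_add_breg h h' xstar xnext x
  rw [hh', hh', ← map_sub, breg_eq_of_quadratic hQ hh hh' x xnext, hgrad, hdisp] at hthree
  simp only [real_inner_smul_left, real_inner_smul_right] at hthree
  linarith

theorem sum_breg_saga_step_le {ι : Type*} [Fintype ι] {Q R : E d →ₗ[ℝ] E d}
    (hQ : Q.IsSymmetric) (hR : R.IsPositive) (hQR : ∀ v, Q (R v) = v) (hRQ : ∀ u, R (Q u) = u)
    {h : E d → ℝ} {h' : E d → E d} (hh : ∀ x, h x = 1 / 2 * ⟪Q x, x⟫) (hh' : ∀ x, h' x = Q x)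
    {fs : ι → E d → ℝ} {fs' : ι → E d → E d} {L : ℝ} (hL : 0 < L)
    (hconv : ∀ i, ConvexOn ℝ Set.univ (fs i)) (hgrad : ∀ i x, HasGradientAt (fs i) (fs' i x) x)
    (hsmooth : ∀ i x y, breg (fs i) (fs' i) x y ≤ L * breg h h' x y)
    {xstar x m : E d} {φ : ι → E d} (hstar : ∑ i, fs' i xstar = 0)
    (hm : ∑ i, fs' i (φ i) = (Fintype.card ι : ℝ) • m)
    {η : ℝ} {g xnext : ι → E d} (hg : ∀ i, g i = fs' i x - fs' i (φ i) + m)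
    (hstep : ∀ i, Q (xnext i) = Q x - η • g i) :
    ∑ i, breg h h' xstar (xnext i)
      ≤ Fintype.card ι * breg h h' xstar x
        - η * (∑ i, breg (fs i) (fs' i) x xstar + ∑ i, breg (fs i) (fs' i) xstar x)
        + 2 * η ^ 2 * L
          * (∑ i, breg (fs i) (fs' i) x xstar + ∑ i, breg (fs i) (fs' i) (φ i) xstar) := by
  have hmean : ∑ i, g i = ∑ i, (fs' i x - fs' i xstar) := by
    simp only [hg, sum_add_distrib, sum_sub_distrib, hm, hstar, sum_const, card_univ,
      Nat.cast_smul_eq_nsmul, sub_zero, sub_add_cancel]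
  have hcorr : ∑ i, ⟪g i, xstar - x⟫
      = -(∑ i, breg (fs i) (fs' i) x xstar + ∑ i, breg (fs i) (fs' i) xstar x) := by
    simp only [← sum_inner, hmean, ← sum_add_distrib, breg_add_breg_swap, ← neg_sub x xstar,
      inner_neg_right, sum_neg_distrib]
  have hcoco (i : ι) (z w : E d) :
      ⟪fs' i z - fs' i w, R (fs' i z - fs' i w)⟫ ≤ 2 * L * breg (fs i) (fs' i) z w :=
    breg_cocoercive hQR hL (hconv i) (hgrad i)
      (fun x y => breg_eq_of_quadratic hQ hh hh' x y ▸ hsmooth i x y) z w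
  have hvar : ∑ i, ⟪g i, R (g i)⟫
      ≤ 4 * L * (∑ i, breg (fs i) (fs' i) x xstar + ∑ i, breg (fs i) (fs' i) (φ i) xstar) := by
    simp only [hg, ← sum_add_distrib]
    refine (hR.sum_inner_saga_le fs' φ hstar hm).trans ?_
    rw [mul_sum, mul_sum, mul_sum, ← sum_add_distrib]
    gcongr with i
    linarith [hcoco i x xstar, hcoco i (φ i) xstar]
  calc ∑ i, breg h h' xstar (xnext i)
      = Fintype.card ι * breg h h' xstar x + η * ∑ i, ⟪g i, xstar - x⟫
        + η ^ 2 / 2 * ∑ i, ⟪g i, R (g i)⟫ := by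
        simp only [breg_quadratic_mirror_step hQ hRQ hh hh' (hstep _), sum_add_distrib,
          sum_const, card_univ, nsmul_eq_mul, ← mul_sum]
    _ ≤ _ := by
        rw [hcorr]
        linarith [mul_le_mul_of_nonneg_left hvar (by positivity : 0 ≤ η ^ 2 / 2)]

end Bregman

-- In the application `D = D_h(x*, x)`, `Dnext = Σᵢ D_h(x*, x⁺ᵢ)`, `Fx = Σᵢ D_{fᵢ}(x, x*)`,
-- `Fx' = Σᵢ D_{fᵢ}(x*, x)` and `H = Σᵢ D_{fᵢ}(φᵢ, x*)`.
theorem saga_potential_le_of_descent {n L μ m D Dnext Fx Fx' H : ℝ} (hn : 0 < n) (hL : 0 < L)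
    (hmμ : m ≤ μ / (8 * L)) (hmn : m ≤ 1 / (2 * n)) (hD : 0 ≤ D) (hFx : 0 ≤ Fx) (hH : 0 ≤ H)
    (hsc : n * μ * D ≤ Fx')
    (hdesc : Dnext ≤ n * D - 1 / (8 * L) * (Fx + Fx') + 2 * (1 / (8 * L)) ^ 2 * L * (Fx + H)) :
    1 / n * (1 / (1 / (8 * L)) * Dnext + n / 2 * (1 / n * ((n - 1) * H + Fx)))
      ≤ (1 - m) * (1 / (1 / (8 * L)) * D + n / 2 * (1 / n * H)) := by
  have hmμ' : m * (8 * L) ≤ μ := by rwa [le_div_iff₀ (by positivity)] at hmμ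
  have hmn' : m * (2 * n) ≤ 1 := by rwa [le_div_iff₀ (by positivity)] at hmn
  have hdesc' : 8 * L * Dnext ≤ 8 * L * n * D - (Fx + Fx') + (Fx + H) / 4 :=
    calc 8 * L * Dnext
        ≤ 8 * L * (n * D - 1 / (8 * L) * (Fx + Fx') + 2 * (1 / (8 * L)) ^ 2 * L * (Fx + H)) := by
          gcongr
      _ = _ := by field_simp; ring
  rw [one_div_one_div, ← sub_nonneg]
  have hgap : (1 - m) * (8 * L * D + n / 2 * (1 / n * H))
      - 1 / n * (8 * L * Dnext + n / 2 * (1 / n * ((n - 1) * H + Fx)))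
      = (n * (1 - m) * (8 * L * D) + n * (1 - m) * H / 2 - 8 * L * Dnext - (n - 1) * H / 2
        - Fx / 2) / n := by
    field_simp
    ring
  rw [hgap]
  apply div_nonneg _ hn.le
  nlinarith [mul_nonneg (mul_nonneg hn.le hD) (sub_nonneg.mpr hmμ'),
    mul_nonneg hH (sub_nonneg.mpr hmn')]

theorem saga_one_step_quadratic_general {d n : ℕ} (hn : 0 < n)
    (Q : E d →L[ℝ] E d)
    (hQsym : ∀ u v : E d, (inner ℝ (Q u) v : ℝ) = inner ℝ u (Q v))
    (hQpos : ∀ u : E d, u ≠ 0 → 0 < (inner ℝ (Q u) u : ℝ))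
    (h : E d → ℝ) (h' : E d → E d)
    (hhdef : ∀ x, h x = (1 / 2) * (inner ℝ (Q x) x : ℝ))
    (hh'def : ∀ x, h' x = Q x)
    (fs : Fin n → E d → ℝ) (fs' : Fin n → E d → E d)
    (f : E d → ℝ) (f' : E d → E d)
    (hfdef : ∀ x, f x = (1 / (n : ℝ)) * ∑ i, fs i x)
    (hf'def : ∀ x, f' x = (1 / (n : ℝ)) • ∑ i, fs' i x)
    (L μ : ℝ) (hL : 0 < L)
    (hfsconv : ∀ i, ConvexOn ℝ Set.univ (fs i))
    (hfsgrad : ∀ i x, HasGradientAt (fs i) (fs' i x) x)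
    (hrelsmooth : ∀ i x y, breg (fs i) (fs' i) x y ≤ L * breg h h' x y)
    (hrelsc : ∀ x y, μ * breg h h' x y ≤ breg f f' x y)
    (xstar xt : E d) (φ : Fin n → E d)
    (hcrit : f' xstar = 0)
    (η : ℝ) (hηdef : η = 1 / (8 * L))
    (g : Fin n → E d)
    (hgdef : ∀ i, g i = fs' i xt - fs' i (φ i) + (1 / (n : ℝ)) • ∑ j, fs' j (φ j))
    (xnext : Fin n → E d)
    (hupdate : ∀ i, Q (xnext i) = Q xt - η • g i) :
    (1 / (n : ℝ)) * ∑ i : Fin n,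
        ((1 / η) * breg h h' xstar (xnext i)
          + ((n : ℝ) / 2) * ((1 / (n : ℝ)) * ∑ j : Fin n,
              breg (fs j) (fs' j) (if j = i then xt else φ j) xstar))
      ≤ (1 - min (μ / (8 * L)) (1 / (2 * (n : ℝ))))
          * ((1 / η) * breg h h' xstar xt
            + ((n : ℝ) / 2) * ((1 / (n : ℝ)) * ∑ j : Fin n,
                breg (fs j) (fs' j) (φ j) xstar)) := by
  subst hηdef
  obtain ⟨R, hR, hQR, hRQ⟩ :=
    LinearMap.exists_isPositive_inverse (Q := (Q : E d →ₗ[ℝ] E d)) hQsym hQpos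
  have hn0 : (n : ℝ) ≠ 0 := by positivity
  have hstar : ∑ i, fs' i xstar = 0 := by simpa [hf'def, hn0] using hcrit
  have hdesc := sum_breg_saga_step_le hQsym hR hQR hRQ hhdef hh'def hL hfsconv hfsgrad hrelsmooth
    hstar (m := (1 / (n : ℝ)) • ∑ j, fs' j (φ j)) (by simp [smul_smul, hn0]) hgdef hupdate
  have hsc : n * μ * breg h h' xstar xt ≤ ∑ i, breg (fs i) (fs' i) xstar xt := by
    have := hrelsc xstar xt
    rw [breg_eq_of_forall_eq_mul_sum hfdef hf'def] at this
    field_simp at this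
    linarith
  have hA : 0 ≤ breg h h' xstar xt := by
    rw [breg_eq_of_quadratic hQsym hhdef hh'def]
    have := hR.inner_nonneg_right ((Q : E d →ₗ[ℝ] E d) (xstar - xt))
    rw [hRQ] at this
    linarith
  have hD (i : Fin n) (x : E d) : 0 ≤ breg (fs i) (fs' i) x xstar :=
    (hfsconv i).breg_nonneg (hfsgrad i xstar) x
  have htable := sum_sum_apply_ite_eq (fun j x => breg (fs j) (fs' j) x xstar) φ xt
  simp only [Fintype.card_fin] at htable
  rw [sum_add_distrib, ← mul_sum, ← mul_sum, ← mul_sum, htable]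
  exact saga_potential_le_of_descent (by positivity) hL (min_le_left _ _) (min_le_right _ _) hA
    (sum_nonneg fun i _ => hD i xt) (sum_nonneg fun i _ => hD i (φ i)) hsc
    (by simpa only [Fintype.card_fin] using hdesc)

/-- **SAGA one-step Lyapunov contraction for quadratic `h`.**
Suppose `h(x) = (1/2)⟪Qx, x⟫` with `Q` a constant symmetric positive definite
Hessian (so `∇h = Q`), each `fᵢ` is convex and `L`-relatively smooth w.r.t. `h`,
`f = (1/n)Σfᵢ` is `μ`-relatively strongly convex with `μ > 0`, `∇f(x*) = 0`,
and Bregman-SAGA is run with step `η = 1/(8L)`: with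
`gᵢ = ∇f_i(x_t) - ∇f_i(φᵢᵗ) + (1/n)Σⱼ∇f_j(φⱼᵗ)` and
`Q x_{t+1}(i) = Q x_t - η gᵢ`, `φ_i^{t+1} = x_t`, other table entries unchanged.
Then the potential `ψ_t = (1/η) D_h(x*, x_t) + (n/2) H_t`, where
`H_t = (1/n)Σᵢ D_{f_i}(φᵢᵗ, x*)`, contracts in expectation:
`E[ψ_{t+1}] ≤ (1 - min(μ/(8L), 1/(2n))) ψ_t`. -/
theorem saga_one_step_quadratic {d n : ℕ} (hn : 0 < n)
    (Q : E d →L[ℝ] E d)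
    (hQsym : ∀ u v : E d, (inner ℝ (Q u) v : ℝ) = inner ℝ u (Q v))
    (hQpos : ∀ u : E d, u ≠ 0 → 0 < (inner ℝ (Q u) u : ℝ))
    (h : E d → ℝ) (h' : E d → E d)
    (hhdef : ∀ x, h x = (1 / 2) * (inner ℝ (Q x) x : ℝ))
    (hh'def : ∀ x, h' x = Q x)
    (fs : Fin n → E d → ℝ) (fs' : Fin n → E d → E d)
    (f : E d → ℝ) (f' : E d → E d)
    (hfdef : ∀ x, f x = (1 / (n : ℝ)) * ∑ i, fs i x)
    (hf'def : ∀ x, f' x = (1 / (n : ℝ)) • ∑ i, fs' i x)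
    (L μ : ℝ) (hL : 0 < L) (hμ : 0 < μ)
    (hfsconv : ∀ i, ConvexOn ℝ Set.univ (fs i))
    (hfsgrad : ∀ i x, HasGradientAt (fs i) (fs' i x) x)
    (hrelsmooth : ∀ i x y, breg (fs i) (fs' i) x y ≤ L * breg h h' x y)
    (hrelsc : ∀ x y, μ * breg h h' x y ≤ breg f f' x y)
    (xstar xt : E d) (φ : Fin n → E d)
    (hcrit : f' xstar = 0)
    (η : ℝ) (hηdef : η = 1 / (8 * L))
    (g : Fin n → E d)
    (hgdef : ∀ i, g i = fs' i xt - fs' i (φ i) + (1 / (n : ℝ)) • ∑ j, fs' j (φ j))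
    (xnext : Fin n → E d)
    (hupdate : ∀ i, Q (xnext i) = Q xt - η • g i) :
    (1 / (n : ℝ)) * ∑ i : Fin n,
        ((1 / η) * breg h h' xstar (xnext i)
          + ((n : ℝ) / 2) * ((1 / (n : ℝ)) * ∑ j : Fin n,
              breg (fs j) (fs' j) (if j = i then xt else φ j) xstar))
      ≤ (1 - min (μ / (8 * L)) (1 / (2 * (n : ℝ))))
          * ((1 / η) * breg h h' xstar xt
            + ((n : ℝ) / 2) * ((1 / (n : ℝ)) * ∑ j : Fin n,
                breg (fs j) (fs' j) (φ j) xstar)) :=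
  saga_one_step_quadratic_general hn Q hQsym hQpos h h' hhdef hh'def fs fs' f f' hfdef hf'def L μ hL
    hfsconv hfsgrad hrelsmooth hrelsc xstar xt φ hcrit η hηdef g hgdef xnext hupdate
end
end
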